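/- arXiv:2406.11183 — 12 statements merged into one kernel-verified Lean document; each statement's English description precedes it below -/
import Mathlib

section
/- Let p ≥ 1 and s ≥ 1 be integers and let (d,r) be an arithmetical structure on the coconut tree CT(p,s). Then the following three conditions are equivalent: (1) d_i ≥ 2 for all 1 ≤ i ≤ p−1; (2) 0 < r_2 − r_1 ≤ r_3 − r_2 ≤ … ≤ r_{p−1} − r_{p−2} ≤ r_p − r_{p−1}; (3) r_1 < r_2 < … < r_p. -/
/-!
Along the path, `d_i r_i = r_{i-1} + r_{i+1}` with `r_0 := 0`, and `r_i > 0`. Hence `d_i ≥ 2`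
says exactly that the differences of `r` do not decrease at `i` (at `i = 1`: `r_1 < r_2`), and a
sequence whose differences start positive and never decrease is increasing. Conversely, if `r` is
increasing then `d_i r_i ≥ r_{i+1} > r_i`, so `d_i ≥ 2`.
-/

/-- The conditions defining an arithmetical structure on the coconut tree `CT(p,s)`:
the path vertices are `v_1, …, v_p` with labels `d i`, `r i` for `1 ≤ i ≤ p`, the
leaves are `ℓ_1, …, ℓ_s` with labels `dl j`, `rl j` for `1 ≤ j ≤ s`; `v_i` is adjacent
to `v_{i+1}` for `1 ≤ i ≤ p - 1` and every leaf is adjacent to `v_p`.  All labels are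
positive, at every vertex `d_v * r_v` equals the sum of the `r`-values of its
neighbors, and the gcd of all the `r`-values is `1`. -/
def IsCTArith (p s : ℕ) (d r dl rl : ℕ → ℕ) : Prop :=
  (∀ i, 1 ≤ i → i ≤ p → 0 < d i) ∧
  (∀ i, 1 ≤ i → i ≤ p → 0 < r i) ∧
  (∀ j, 1 ≤ j → j ≤ s → 0 < dl j) ∧
  (∀ j, 1 ≤ j → j ≤ s → 0 < rl j) ∧
  (∀ i, 1 ≤ i → i ≤ p → d i * r i =
      (if 2 ≤ i then r (i - 1) else 0) +
      (if i < p then r (i + 1) else 0) +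
      (if i = p then ∑ j ∈ Finset.Icc 1 s, rl j else 0)) ∧
  (∀ j, 1 ≤ j → j ≤ s → dl j * rl j = r p) ∧
  Nat.gcd ((Finset.Icc 1 p).gcd r) ((Finset.Icc 1 s).gcd rl) = 1

/-- An arithmetical structure on `CT(p,s)` is smooth if `d_i ≥ 2` for all
`1 ≤ i ≤ p - 1` and `d_{ℓ_j} ≥ 2` for all `1 ≤ j ≤ s`. -/
def IsCTSmooth (p s : ℕ) (d dl : ℕ → ℕ) : Prop :=
  (∀ i, 1 ≤ i → i ≤ p - 1 → 2 ≤ d i) ∧ (∀ j, 1 ≤ j → j ≤ s → 2 ≤ dl j)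

theorem lt_succ_of_sub_monotone {α : Type*} [AddCommGroup α] [LinearOrder α]
    [IsOrderedAddMonoid α] {f : ℕ → α} {a n : ℕ} (hstart : 0 < f (a + 1) - f a)
    (hmono : ∀ i, a + 1 ≤ i → i ≤ n → f i - f (i - 1) ≤ f (i + 1) - f i) :
    ∀ i, a ≤ i → i ≤ n → f i < f (i + 1) := by
  suffices ∀ i, a ≤ i → i ≤ n → 0 < f (i + 1) - f i from
    fun i hai hin => sub_pos.1 (this i hai hin)
  intro i hai
  induction i, hai using Nat.le_induction with
  | base => exact fun _ => hstart
  | succ i hai ih =>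
    intro hin
    have := hmono (i + 1) (by omega) hin
    rw [Nat.add_sub_cancel] at this
    exact (ih (by omega)).trans_le this

namespace IsCTArith

variable {p s : ℕ} {d r dl rl : ℕ → ℕ}

theorem r_pos (h : IsCTArith p s d r dl rl) {i : ℕ} (hi : 1 ≤ i) (hip : i ≤ p) : 0 < r i :=
  h.2.1 i hi hip

theorem d_one_mul (h : IsCTArith p s d r dl rl) (hp : 1 < p) : d 1 * r 1 = r 2 := by
  simpa [hp, hp.ne] using h.2.2.2.2.1 1 le_rfl hp.le

theorem d_mul_of_lt (h : IsCTArith p s d r dl rl) {i : ℕ} (hi : 2 ≤ i) (hip : i < p) :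
    d i * r i = r (i - 1) + r (i + 1) := by
  simpa [hi, hip, hip.ne] using h.2.2.2.2.1 i (by omega) hip.le

theorem two_le_d_one_iff (h : IsCTArith p s d r dl rl) (hp : 1 < p) :
    2 ≤ d 1 ↔ r 1 < r 2 := by
  rw [← h.d_one_mul hp, lt_mul_iff_one_lt_left (h.r_pos le_rfl hp.le)]
  rfl

theorem two_le_d_iff_of_lt (h : IsCTArith p s d r dl rl) {i : ℕ} (hi : 2 ≤ i) (hip : i < p) :
    2 ≤ d i ↔ 2 * r i ≤ r (i - 1) + r (i + 1) := by
  rw [← h.d_mul_of_lt hi hip, Nat.mul_le_mul_right_iff (h.r_pos (by omega) hip.le)]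

theorem two_le_d_iff_sub_monotone (h : IsCTArith p s d r dl rl) :
    (∀ i, 1 ≤ i → i ≤ p - 1 → 2 ≤ d i) ↔
      ((1 < p → 0 < (r 2 : ℤ) - (r 1 : ℤ)) ∧
        ∀ i, 2 ≤ i → i ≤ p - 1 →
          (r i : ℤ) - (r (i - 1) : ℤ) ≤ (r (i + 1) : ℤ) - (r i : ℤ)) := by
  constructor
  · intro hd
    refine ⟨fun hp => ?_, fun i hi hip => ?_⟩
    · have := (h.two_le_d_one_iff hp).1 (hd 1 le_rfl (by omega))
      omega
    · have := (h.two_le_d_iff_of_lt hi (by omega)).1 (hd i (by omega) hip)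
      omega
  · rintro ⟨hstart, hmono⟩ i hi hip
    obtain rfl | hi := eq_or_lt_of_le hi
    · exact (h.two_le_d_one_iff (by omega)).2 (by linarith [hstart (by omega)])
    · exact (h.two_le_d_iff_of_lt hi (by omega)).2 (by linarith [hmono i hi hip])

theorem two_le_d_of_lt_succ (h : IsCTArith p s d r dl rl)
    (hr : ∀ i, 1 ≤ i → i ≤ p - 1 → r i < r (i + 1)) :
    ∀ i, 1 ≤ i → i ≤ p - 1 → 2 ≤ d i := by
  intro i hi hip
  obtain rfl | hi := eq_or_lt_of_le hi
  · exact (h.two_le_d_one_iff (by omega)).2 (hr 1 le_rfl hip)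
  · have hlt : r i < d i * r i := by
      rw [h.d_mul_of_lt hi (by omega)]
      linarith [hr i (by omega) hip]
    exact (lt_mul_iff_one_lt_left (h.r_pos (by omega) (by omega))).1 hlt

end IsCTArith

theorem ct_increasing_r_tfae_general (p s : ℕ)
    (d r dl rl : ℕ → ℕ) (h : IsCTArith p s d r dl rl) :
    ((∀ i, 1 ≤ i → i ≤ p - 1 → 2 ≤ d i) ↔
      ((1 < p → 0 < (r 2 : ℤ) - (r 1 : ℤ)) ∧
        ∀ i, 2 ≤ i → i ≤ p - 1 →
          (r i : ℤ) - (r (i - 1) : ℤ) ≤ (r (i + 1) : ℤ) - (r i : ℤ))) ∧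
    (((1 < p → 0 < (r 2 : ℤ) - (r 1 : ℤ)) ∧
        ∀ i, 2 ≤ i → i ≤ p - 1 →
          (r i : ℤ) - (r (i - 1) : ℤ) ≤ (r (i + 1) : ℤ) - (r i : ℤ)) ↔
      (∀ i, 1 ≤ i → i ≤ p - 1 → r i < r (i + 1))) := by
  refine ⟨h.two_le_d_iff_sub_monotone, fun ⟨hstart, hmono⟩ i hi hip => ?_,
    fun hr => h.two_le_d_iff_sub_monotone.1 (h.two_le_d_of_lt_succ hr)⟩
  have hp : 1 < p := by omega
  exact_mod_cast lt_succ_of_sub_monotone (f := fun i => (r i : ℤ)) (hstart hp) hmono i hi hip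

/-- Lemma 2.1 analogue for coconut trees.  For an arithmetical
structure `(d, r)` on `CT(p,s)`, the following are equivalent:
(1) `d_i ≥ 2` for all `1 ≤ i ≤ p-1`;
(2) `0 < r_2 - r_1 ≤ r_3 - r_2 ≤ … ≤ r_p - r_{p-1}`;
(3) `r_1 < r_2 < … < r_p`. -/
theorem ct_increasing_r_tfae (p s : ℕ) (hp : 1 ≤ p) (hs : 1 ≤ s)
    (d r dl rl : ℕ → ℕ) (h : IsCTArith p s d r dl rl) :
    ((∀ i, 1 ≤ i → i ≤ p - 1 → 2 ≤ d i) ↔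
      ((1 < p → 0 < (r 2 : ℤ) - (r 1 : ℤ)) ∧
        ∀ i, 2 ≤ i → i ≤ p - 1 →
          (r i : ℤ) - (r (i - 1) : ℤ) ≤ (r (i + 1) : ℤ) - (r i : ℤ))) ∧
    (((1 < p → 0 < (r 2 : ℤ) - (r 1 : ℤ)) ∧
        ∀ i, 2 ≤ i → i ≤ p - 1 →
          (r i : ℤ) - (r (i - 1) : ℤ) ≤ (r (i + 1) : ℤ) - (r i : ℤ)) ↔
      (∀ i, 1 ≤ i → i ≤ p - 1 → r i < r (i + 1))) :=
  ct_increasing_r_tfae_general p s d r dl rl h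
end

section
/- Let p ≥ 1 and s ≥ 1 be integers. An arithmetical structure (d,r) on the coconut tree CT(p,s) is smooth if and only if r_{ℓ_j} < r_p for all 1 ≤ j ≤ s and r_1 < r_2 < … < r_p. -/
theorem two_le_iff_lt_of_mul_eq_add {a b c d : ℕ} (hab : a < b) (h : d * b = a + c) :
    2 ≤ d ↔ b < c := by
  constructor
  · intro hd
    nlinarith
  · intro hbc
    by_contra! hd
    interval_cases d <;> omega

namespace IsCTArith

variable {p s : ℕ} {d r dl rl : ℕ → ℕ} (h : IsCTArith p s d r dl rl)
include h

theorem two_le_dl_iff {j : ℕ} (hj : 1 ≤ j) (hjs : j ≤ s) : 2 ≤ dl j ↔ rl j < r p := by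
  obtain ⟨-, -, -, hrl, -, hleaf, -⟩ := h
  exact two_le_iff_lt_of_mul_eq_add (hrl j hj hjs) (by rw [hleaf j hj hjs, zero_add])

theorem two_le_d_iff {i : ℕ} (hi : 1 ≤ i) (hip : i ≤ p - 1) (hprev : 2 ≤ i → r (i - 1) < r i) :
    2 ≤ d i ↔ r i < r (i + 1) := by
  obtain ⟨-, hr, -, -, hpath, -, -⟩ := h
  have heq := hpath i hi (by omega)
  rw [if_pos (by omega : i < p), if_neg (by omega : i ≠ p), add_zero] at heq
  refine two_le_iff_lt_of_mul_eq_add ?_ heq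
  split_ifs with h2
  · exact hprev h2
  · exact hr i hi (by omega)

theorem path_smooth_iff :
    (∀ i, 1 ≤ i → i ≤ p - 1 → 2 ≤ d i) ↔ ∀ i, 1 ≤ i → i ≤ p - 1 → r i < r (i + 1) := by
  constructor
  · intro hd i hi
    induction i, hi using Nat.le_induction with
    | base => exact fun hip => (h.two_le_d_iff le_rfl hip (by omega)).1 (hd 1 le_rfl hip)
    | succ i hi ih =>
      intro hip
      refine (h.two_le_d_iff (by omega) hip fun _ => ?_).1 (hd (i + 1) (by omega) hip)
      exact ih (by omega)
  · intro hr i hi hip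
    refine (h.two_le_d_iff hi hip fun h2 => ?_).2 (hr i hi hip)
    have := hr (i - 1) (by omega) (by omega)
    rwa [Nat.sub_add_cancel (by omega)] at this

end IsCTArith

theorem ct_smooth_iff_general (p s : ℕ)
    (d r dl rl : ℕ → ℕ) (h : IsCTArith p s d r dl rl) :
    IsCTSmooth p s d dl ↔
      ((∀ j, 1 ≤ j → j ≤ s → rl j < r p) ∧
        ∀ i, 1 ≤ i → i ≤ p - 1 → r i < r (i + 1)) := by
  have hleaves : (∀ j, 1 ≤ j → j ≤ s → 2 ≤ dl j) ↔ ∀ j, 1 ≤ j → j ≤ s → rl j < r p :=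
    forall_congr' fun j => imp_congr_right fun hj =>
      imp_congr_right fun hjs => h.two_le_dl_iff hj hjs
  rw [IsCTSmooth, h.path_smooth_iff, hleaves, and_comm]

/-- An arithmetical structure `(d, r)` on `CT(p,s)` is smooth if and
only if `r_{ℓ_j} < r_p` for all `1 ≤ j ≤ s` and `r_1 < r_2 < … < r_p`. -/
theorem ct_smooth_iff (p s : ℕ) (hp : 1 ≤ p) (hs : 1 ≤ s)
    (d r dl rl : ℕ → ℕ) (h : IsCTArith p s d r dl rl) :
    IsCTSmooth p s d dl ↔
      ((∀ j, 1 ≤ j → j ≤ s → rl j < r p) ∧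
        ∀ i, 1 ≤ i → i ≤ p - 1 → r i < r (i + 1)) :=
  ct_smooth_iff_general p s d r dl rl h
end

section
/- Let p ≥ 2 and s ≥ 1 be integers and let (d,r) be an arithmetical structure on CT(p,s). (a) If d_1 = 1, then the pair (d′,r′) obtained by deleting the vertex v_1 — namely r′_j = r_{j+1} for 1 ≤ j ≤ p−1 with leaf values unchanged, d′_1 = d_2 − 1, d′_j = d_{j+1} for 2 ≤ j ≤ p−1, with leaf d-values unchanged — is a valid arithmetical structure on CT(p−1,s). (b) If s ≥ 2 and d_{ℓ_i} = 1 for some leaf ℓ_i, then the pair (d′,r′) obtained by deleting the leaf ℓ_i — namely all path r-values and the remaining leaf r-values unchanged, d′_p = d_p − 1, all other d-values unchanged — is a valid arithmetical structure on CT(p,s−1). -/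
private lemma sum_del' (rl : ℕ → ℕ) : ∀ n k : ℕ, k ≤ n →
    (∑ j ∈ Finset.Icc 1 n, if j ≤ k then rl j else rl (j+1)) + rl (k+1)
      = ∑ j ∈ Finset.Icc 1 (n+1), rl j := by
  intro n
  induction n with
  | zero =>
    intro k hk
    interval_cases k
    simp
  | succ n ih =>
    intro k hk
    rw [Finset.sum_Icc_succ_top (by omega : 1 ≤ n + 1 + 1) rl,
        Finset.sum_Icc_succ_top (by omega : 1 ≤ n + 1)]
    rcases Nat.lt_or_ge k (n+1) with hlt | hge
    · rw [if_neg (by omega)]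
      have hkey := ih k (by omega)
      omega
    · have hk1 : k = n + 1 := by omega
      subst hk1
      rw [if_pos (by omega)]
      have hall : ∀ j ∈ Finset.Icc 1 n, (if j ≤ n + 1 then rl j else rl (j+1)) = rl j := by
        intro j hj
        simp only [Finset.mem_Icc] at hj
        rw [if_pos (by omega)]
      rw [Finset.sum_congr rfl hall,
          ← Finset.sum_Icc_succ_top (by omega : 1 ≤ n + 1) rl]

/-- Smoothing an arithmetical structure on `CT(p,s)` at a degree-1
vertex with `d`-value `1`:
(a) if `d_1 = 1`, deleting `v_1` (with `r'_j = r_{j+1}`, `d'_1 = d_2 - 1`,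
`d'_j = d_{j+1}` for `2 ≤ j ≤ p-1`, leaf labels unchanged) yields a valid
arithmetical structure on `CT(p-1,s)`;
(b) if `s ≥ 2` and `d_{ℓ_i} = 1` for some `1 ≤ i ≤ s`, deleting the leaf `ℓ_i`
(with all path `r`-values and remaining leaf labels unchanged and `d'_p = d_p - 1`)
yields a valid arithmetical structure on `CT(p,s-1)`. -/
theorem ct_smoothing_degree_one_vertex (p s : ℕ) (hp : 2 ≤ p) (hs : 1 ≤ s)
    (d r dl rl : ℕ → ℕ) (h : IsCTArith p s d r dl rl) :
    (d 1 = 1 →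
      IsCTArith (p - 1) s
        (fun j => if j = 1 then d 2 - 1 else d (j + 1))
        (fun j => r (j + 1))
        dl rl) ∧
    (∀ i, 2 ≤ s → 1 ≤ i → i ≤ s → dl i = 1 →
      IsCTArith p (s - 1)
        (fun j => if j = p then d p - 1 else d j)
        r
        (fun j => if j ≤ i - 1 then dl j else dl (j + 1))
        (fun j => if j ≤ i - 1 then rl j else rl (j + 1))) := by
  obtain ⟨hd, hr, hdl, hrl, hv, hl, hg⟩ := h
  have hrlpos : 0 < ∑ j ∈ Finset.Icc 1 s, rl j := by
    apply Finset.sum_pos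
    · intro j hj; simp only [Finset.mem_Icc] at hj; exact hrl j hj.1 hj.2
    · exact ⟨1, by simp only [Finset.mem_Icc]; omega⟩
  constructor
  · -- part (a)
    intro hd1
    have hv1 := hv 1 le_rfl (by omega)
    rw [if_neg (by omega), if_pos (by omega), if_neg (by omega), hd1, one_mul] at hv1
    norm_num at hv1
    have hr12 : r 1 = r 2 := by omega
    have hv2 := hv 2 (by omega) hp
    rw [if_pos (by omega), show (2:ℕ) - 1 = 1 from rfl] at hv2
    have hpos : 0 < (if 2 < p then r (2+1) else 0) +
        (if 2 = p then ∑ j ∈ Finset.Icc 1 s, rl j else 0) := by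
      rcases eq_or_lt_of_le hp with he | hlt
      · rw [if_neg (by omega), if_pos he]; simpa using hrlpos
      · rw [if_pos hlt, if_neg (by omega)]
        have := hr (2+1) (by omega) (by omega); omega
    have hd2 : 2 ≤ d 2 := by
      have hlt2 : r 2 < d 2 * r 2 := by rw [hv2]; omega
      by_contra hc
      push_neg at hc
      have : d 2 * r 2 ≤ 1 * r 2 := Nat.mul_le_mul_right _ (by omega)
      rw [one_mul] at this; omega
    refine ⟨?_, ?_, hdl, hrl, ?_, ?_, ?_⟩
    · intro i h1 h2
      dsimp only
      split_ifs with hi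
      · omega
      · exact hd (i+1) (by omega) (by omega)
    · intro i h1 h2
      exact hr (i+1) (by omega) (by omega)
    · intro i h1 h2
      dsimp only
      by_cases hi1 : i = 1
      · subst hi1
        rw [if_pos rfl, if_neg (by omega)]
        have hsub : (d 2 - 1) * r (1+1) = d 2 * r 2 - r 2 := by
          norm_num [Nat.sub_mul]
        rcases eq_or_lt_of_le hp with he | hlt
        · rw [if_neg (by omega : ¬ (1:ℕ) < p - 1), if_pos (by omega : (1:ℕ) = p - 1)]
          rw [if_neg (by omega), if_pos he] at hv2
          rw [hsub, hv2]
          omega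
        · rw [if_pos (by omega : (1:ℕ) < p - 1), if_neg (by omega : ¬ (1:ℕ) = p - 1)]
          rw [if_pos hlt, if_neg (by omega)] at hv2
          rw [hsub, hv2, show ((1:ℕ)+1+1) = 2+1 from rfl]
          omega
      · rw [if_neg hi1, if_pos (by omega : 2 ≤ i), show i - 1 + 1 = i from by omega]
        have hvi := hv (i+1) (by omega) (by omega)
        rw [if_pos (by omega : 2 ≤ i + 1), show i + 1 - 1 = i from by omega] at hvi
        rcases Nat.lt_or_ge (i+1) p with hltp | hgep
        · rw [if_pos hltp, if_neg (by omega)] at hvi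
          rw [if_pos (by omega : i < p - 1), if_neg (by omega : ¬ i = p - 1)]
          exact hvi
        · rw [if_neg (by omega), if_pos (by omega : i + 1 = p)] at hvi
          rw [if_neg (by omega : ¬ i < p - 1), if_pos (by omega : i = p - 1)]
          exact hvi
    · intro j h1 h2
      show dl j * rl j = r (p - 1 + 1)
      rw [show p - 1 + 1 = p from by omega]
      exact hl j h1 h2
    · have hAB : (Finset.Icc 1 (p-1)).gcd (fun j => r (j+1)) = (Finset.Icc 1 p).gcd r := by
        apply Nat.dvd_antisymm
        · apply Finset.dvd_gcd
          intro k hk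
          simp only [Finset.mem_Icc] at hk
          rcases eq_or_lt_of_le hk.1 with he | h2k
          · rw [← he, hr12]
            have := Finset.gcd_dvd (f := fun j => r (j+1))
              (show 1 ∈ Finset.Icc 1 (p-1) by simp only [Finset.mem_Icc]; omega)
            simpa using this
          · have := Finset.gcd_dvd (f := fun j => r (j+1))
              (show k - 1 ∈ Finset.Icc 1 (p-1) by simp only [Finset.mem_Icc]; omega)
            simpa [show k - 1 + 1 = k from by omega] using this
        · apply Finset.dvd_gcd
          intro k hk
          simp only [Finset.mem_Icc] at hk
          exact Finset.gcd_dvd (by simp only [Finset.mem_Icc]; omega : k + 1 ∈ Finset.Icc 1 p)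
      rw [hAB]; exact hg
  · -- part (b)
    intro i hs2 hi1 his hdli
    have hrli : rl i = r p := by
      have := hl i hi1 his; rwa [hdli, one_mul] at this
    have hvp := hv p (by omega) le_rfl
    rw [if_pos hp, if_neg (lt_irrefl p), if_pos rfl] at hvp
    have hsum : (∑ j ∈ Finset.Icc 1 (s-1), if j ≤ i - 1 then rl j else rl (j+1)) + rl i
        = ∑ j ∈ Finset.Icc 1 s, rl j := by
      have := sum_del' rl (s-1) (i-1) (by omega)
      rwa [show i - 1 + 1 = i from by omega, show s - 1 + 1 = s from by omega] at this
    have hdp : 2 ≤ d p := by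
      have h1 : r p ≤ ∑ j ∈ Finset.Icc 1 s, rl j := by
        rw [← hrli]
        exact Finset.single_le_sum (fun j _ => Nat.zero_le _)
          (by simp only [Finset.mem_Icc]; omega)
      have h2 : r p < d p * r p := by
        rw [hvp]; have := hr (p-1) (by omega) (by omega); omega
      by_contra hc; push_neg at hc
      have : d p * r p ≤ 1 * r p := Nat.mul_le_mul_right _ (by omega)
      rw [one_mul] at this; omega
    refine ⟨?_, hr, ?_, ?_, ?_, ?_, ?_⟩
    · intro j h1 h2
      dsimp only
      split_ifs with hj
      · omega
      · exact hd j h1 h2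
    · intro j h1 h2
      dsimp only
      split_ifs with hj
      · exact hdl j h1 (by omega)
      · exact hdl (j+1) (by omega) (by omega)
    · intro j h1 h2
      dsimp only
      split_ifs with hj
      · exact hrl j h1 (by omega)
      · exact hrl (j+1) (by omega) (by omega)
    · intro k h1 h2
      dsimp only
      by_cases hk : k = p
      · rw [hk]
        rw [if_pos rfl, if_pos hp, if_neg (lt_irrefl p), if_pos rfl]
        have hsub : (d p - 1) * r p = d p * r p - r p := by rw [Nat.sub_mul, one_mul]
        rw [hsub, hvp]
        omega
      · rw [if_neg hk, if_neg hk]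
        have := hv k h1 h2
        rwa [if_neg hk] at this
    · intro j h1 h2
      dsimp only
      split_ifs with hj
      · exact hl j h1 (by omega)
      · exact hl (j+1) (by omega) (by omega)
    · have hg1 : Nat.gcd ((Finset.Icc 1 p).gcd r)
          ((Finset.Icc 1 (s-1)).gcd (fun j => if j ≤ i-1 then rl j else rl (j+1)))
          ∣ (Finset.Icc 1 p).gcd r := Nat.gcd_dvd_left _ _
      have hg2 : Nat.gcd ((Finset.Icc 1 p).gcd r)
          ((Finset.Icc 1 (s-1)).gcd (fun j => if j ≤ i-1 then rl j else rl (j+1)))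
          ∣ (Finset.Icc 1 s).gcd rl := by
        apply Finset.dvd_gcd
        intro k hk
        simp only [Finset.mem_Icc] at hk
        by_cases hik : k = i
        · rw [hik, hrli]
          exact hg1.trans (Finset.gcd_dvd
            (by simp only [Finset.mem_Icc]; omega : p ∈ Finset.Icc 1 p))
        · by_cases hki : k ≤ i - 1
          · have := (Nat.gcd_dvd_right ((Finset.Icc 1 p).gcd r) ((Finset.Icc 1 (s-1)).gcd (fun j => if j ≤ i-1 then rl j else rl (j+1)))).trans (Finset.gcd_dvd
              (f := fun j => if j ≤ i-1 then rl j else rl (j+1))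
              (show k ∈ Finset.Icc 1 (s-1) by simp only [Finset.mem_Icc]; omega))
            simpa [if_pos hki] using this
          · have := (Nat.gcd_dvd_right ((Finset.Icc 1 p).gcd r) ((Finset.Icc 1 (s-1)).gcd (fun j => if j ≤ i-1 then rl j else rl (j+1)))).trans (Finset.gcd_dvd
              (f := fun j => if j ≤ i-1 then rl j else rl (j+1))
              (show k - 1 ∈ Finset.Icc 1 (s-1) by simp only [Finset.mem_Icc]; omega))
            simpa only [if_neg (show ¬ (k - 1 ≤ i - 1) from by omega),
                   show k - 1 + 1 = k from by omega] using this
      have hfin := Nat.dvd_gcd hg1 hg2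
      rw [hg] at hfin
      exact Nat.dvd_one.mp hfin
end

section
/- Let p ≥ 1 and s ≥ 1 be integers and let (d,r) be an arithmetical structure on CT(p,s). For any 1 ≤ i ≤ p, the pair (d′,r′) obtained by subdividing at position i is a valid arithmetical structure on CT(p+1,s). Here, for i > 1, r′ is obtained by inserting a new path vertex with r-value r_{i−1} + r_i between v_{i−1} and v_i (so r′_j = r_j for j < i, r′_i = r_{i−1} + r_i, r′_j = r_{j−1} for i+1 ≤ j ≤ p+1, leaf values unchanged), and d′_{i−1} = d_{i−1} + 1, d′_i = 1, d′_{i+1} = d_i + 1, all other d-values shifted accordingly; for i = 1, r′ is obtained by prepending a new initial vertex with r-value r_1 (so r′_1 = r′_2 = r_1, r′_j = r_{j−1} for 2 ≤ j ≤ p+1, leaf values unchanged), with d′_1 = 1, d′_2 = d_1 + 1, and the remaining d-values shifted accordingly. -/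
/-- Subdividing an arithmetical structure on `CT(p,s)` at position
`i` (for `1 ≤ i ≤ p`) yields a valid arithmetical structure on `CT(p+1,s)`.
For `i > 1` a new path vertex with `r`-value `r_{i-1} + r_i` is inserted between
`v_{i-1}` and `v_i`, with `d'_{i-1} = d_{i-1} + 1`, `d'_i = 1`, `d'_{i+1} = d_i + 1`
and all other labels shifted accordingly; for `i = 1` a new initial vertex with
`r`-value `r_1` is prepended, with `d'_1 = 1` and `d'_2 = d_1 + 1`. -/
theorem ct_subdivision (p s i : ℕ) (hp : 1 ≤ p) (hs : 1 ≤ s)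
    (hi1 : 1 ≤ i) (hip : i ≤ p)
    (d r dl rl : ℕ → ℕ) (h : IsCTArith p s d r dl rl) :
    IsCTArith (p + 1) s
      (fun j => if j ≤ i - 2 then d j
                else if j = i - 1 then d (i - 1) + 1
                else if j = i then 1
                else if j = i + 1 then d i + 1
                else d (j - 1))
      (fun j => if j ≤ i - 1 then r j
                else if j = i then (if i = 1 then r 1 else r (i - 1) + r i)
                else r (j - 1))
      dl rl := by
  obtain ⟨hd, hr, hdl, hrl, heq, hleaf, hgcd⟩ := h
  set r' : ℕ → ℕ := fun j => if j ≤ i - 1 then r j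
                else if j = i then (if i = 1 then r 1 else r (i - 1) + r i)
                else r (j - 1) with hr'
  refine ⟨?_, ?_, hdl, hrl, ?_, ?_, ?_⟩
  · -- positivity of d'
    intro j hj1 hj2
    dsimp only
    split_ifs with h1 h2 h3 h4
    · exact hd j hj1 (by omega)
    · have := hd (i - 1) (by omega) (by omega); omega
    · norm_num
    · have := hd i hi1 hip; omega
    · exact hd (j - 1) (by omega) (by omega)
  · -- positivity of r'
    intro j hj1 hj2
    rw [hr']
    dsimp only
    split_ifs with h1 h2 h3
    · exact hr j hj1 (by omega)
    · exact hr 1 le_rfl hp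
    · have := hr i hi1 hip; omega
    · exact hr (j - 1) (by omega) (by omega)
  · -- vertex equations
    intro j hj1 hj2
    rw [hr']
    dsimp only
    rcases Nat.lt_or_ge j (i-1) with hc | hc
    · -- j ≤ i - 2 (so i ≥ 3)
      have H := heq j hj1 (by omega)
      rw [if_pos (show j ≤ i - 2 by omega), if_pos (show j ≤ i - 1 by omega),
          if_pos (show j - 1 ≤ i - 1 by omega), if_pos (show j + 1 ≤ i - 1 by omega),
          if_pos (show j < p + 1 by omega), if_neg (show ¬ j = p + 1 by omega)]
      rw [if_pos (show j < p by omega), if_neg (show ¬ j = p by omega)] at H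
      exact H
    rcases eq_or_lt_of_le hc with hc2 | hc2
    · -- j = i - 1, i ≥ 2
      have hi2 : 2 ≤ i := by omega
      have H := heq (i-1) (by omega) (by omega)
      rw [if_neg (show ¬ j ≤ i - 2 by omega), if_pos (show j = i - 1 by omega),
          if_pos (show j ≤ i - 1 by omega),
          if_pos (show j - 1 ≤ i - 1 by omega),
          if_neg (show ¬ j + 1 ≤ i - 1 by omega), if_pos (show j + 1 = i by omega),
          if_neg (show ¬ i = 1 by omega),
          if_pos (show j < p + 1 by omega), if_neg (show ¬ j = p + 1 by omega)]
      rw [if_pos (show i - 1 < p by omega), if_neg (show ¬ i - 1 = p by omega)] at H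
      have hj : j = i - 1 := by omega
      subst hj
      rw [Nat.sub_add_cancel hi1] at H
      rw [add_mul, one_mul, H]
      ring
    rcases Nat.eq_or_lt_of_le hc2 with hc3 | hc3
    · -- j = i
      have hj : j = i := by omega
      subst hj
      rw [if_neg (show ¬ j ≤ j - 2 by omega), if_neg (show ¬ j = j - 1 by omega),
          if_pos rfl, if_neg (show ¬ j ≤ j - 1 by omega), if_pos rfl,
          if_pos (show j - 1 ≤ j - 1 by omega),
          if_neg (show ¬ j + 1 ≤ j - 1 by omega), if_neg (show ¬ j + 1 = j by omega),
          if_pos (show j < p + 1 by omega), if_neg (show ¬ j = p + 1 by omega),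
          Nat.add_sub_cancel]
      by_cases h1 : j = 1
      · rw [if_pos h1, if_neg (show ¬ 2 ≤ j by omega), h1]
        ring
      · rw [if_neg h1, if_pos (show 2 ≤ j by omega)]
        ring
    rcases Nat.eq_or_lt_of_le hc3 with hc4 | hc4
    · -- j = i + 1
      have hj : j = i + 1 := by omega
      subst hj
      have H := heq i hi1 hip
      rw [if_neg (show ¬ i + 1 ≤ i - 2 by omega), if_neg (show ¬ i + 1 = i - 1 by omega),
          if_neg (show ¬ i + 1 = i by omega), if_pos rfl,
          if_neg (show ¬ i + 1 ≤ i - 1 by omega), if_neg (show ¬ i + 1 = i by omega),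
          if_pos (show 2 ≤ i + 1 by omega),
          if_neg (show ¬ i + 1 - 1 ≤ i - 1 by omega), if_pos (show i + 1 - 1 = i by omega),
          if_neg (show ¬ i + 1 + 1 ≤ i - 1 by omega), if_neg (show ¬ i + 1 + 1 = i by omega),
          Nat.add_sub_cancel]
      rcases Nat.eq_or_lt_of_le hip with hh | hh
      · -- i = p
        rw [if_neg (show ¬ i + 1 < p + 1 by omega), if_pos (show i + 1 = p + 1 by omega)]
        rw [if_neg (show ¬ i < p by omega), if_pos hh] at H
        by_cases h1 : i = 1
        · rw [if_pos h1]
          rw [if_neg (show ¬ 2 ≤ i by omega)] at H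
          subst h1
          rw [add_mul, one_mul, H]; ring
        · rw [if_neg h1]
          rw [if_pos (show 2 ≤ i by omega)] at H
          rw [add_mul, one_mul, H]; ring
      · rw [if_pos (show i + 1 < p + 1 by omega), Nat.add_sub_cancel,
            if_neg (show ¬ i + 1 = p + 1 by omega)]
        rw [if_pos (show i < p by omega), if_neg (show ¬ i = p by omega)] at H
        by_cases h1 : i = 1
        · rw [if_pos h1]
          rw [if_neg (show ¬ 2 ≤ i by omega)] at H
          subst h1
          rw [add_mul, one_mul, H]; ring
        · rw [if_neg h1]
          rw [if_pos (show 2 ≤ i by omega)] at H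
          rw [add_mul, one_mul, H]; ring
    · -- j ≥ i + 2
      have H := heq (j-1) (by omega) (by omega)
      rw [if_neg (show ¬ j ≤ i - 2 by omega), if_neg (show ¬ j = i - 1 by omega),
          if_neg (show ¬ j = i by omega), if_neg (show ¬ j = i + 1 by omega),
          if_neg (show ¬ j ≤ i - 1 by omega), if_neg (show ¬ j = i by omega),
          if_pos (show 2 ≤ j by omega),
          if_neg (show ¬ j - 1 ≤ i - 1 by omega), if_neg (show ¬ j - 1 = i by omega)]
      rw [if_pos (show 2 ≤ j - 1 by omega), Nat.sub_add_cancel hj1] at H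
      rcases Nat.eq_or_lt_of_le hj2 with hh | hh
      · rw [if_neg (show ¬ j < p + 1 by omega), if_pos hh]
        rw [if_neg (show ¬ j - 1 < p by omega), if_pos (show j - 1 = p by omega)] at H
        exact H
      · rw [if_pos (show j < p + 1 by omega),
            if_neg (show ¬ j + 1 ≤ i - 1 by omega), if_neg (show ¬ j + 1 = i by omega),
            Nat.add_sub_cancel, if_neg (show ¬ j = p + 1 by omega)]
        rw [if_pos (show j - 1 < p by omega), if_neg (show ¬ j - 1 = p by omega)] at H
        exact H
  · -- leaf equations
    intro j hj1 hj2
    rw [hr']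
    dsimp only
    rw [if_neg (show ¬ p + 1 ≤ i - 1 by omega), if_neg (show ¬ p + 1 = i by omega),
        Nat.add_sub_cancel]
    exact hleaf j hj1 hj2
  · -- gcd
    have hdvd : (Finset.Icc 1 (p+1)).gcd r' ∣ (Finset.Icc 1 p).gcd r := by
      apply Finset.dvd_gcd
      intro j hj
      rw [Finset.mem_Icc] at hj
      rcases Nat.lt_or_ge j i with hc | hc
      · have : r j = r' (j) := by
          rw [hr']; dsimp only
          rw [if_pos (show j ≤ i - 1 by omega)]
        rw [this]
        exact Finset.gcd_dvd (by rw [Finset.mem_Icc]; omega)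
      · have : r j = r' (j + 1) := by
          rw [hr']; dsimp only
          rw [if_neg (show ¬ j + 1 ≤ i - 1 by omega), if_neg (show ¬ j + 1 = i by omega),
              Nat.add_sub_cancel]
        rw [this]
        exact Finset.gcd_dvd (by rw [Finset.mem_Icc]; omega)
    have h2 : Nat.gcd ((Finset.Icc 1 (p+1)).gcd r') ((Finset.Icc 1 s).gcd rl) ∣
        Nat.gcd ((Finset.Icc 1 p).gcd r) ((Finset.Icc 1 s).gcd rl) := by
      exact Nat.dvd_gcd ((Nat.gcd_dvd_left _ _).trans hdvd) (Nat.gcd_dvd_right _ _)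
    rw [hgcd] at h2
    exact Nat.dvd_one.mp h2
end

section
/- Fix an integer s ≥ 2, let 1 ≤ i ≤ p, and let (d,r) be a smooth arithmetical structure on CT(i,s). Then the number of arithmetical structures on CT(p,s) that are descendants of (d,r) (i.e., obtainable from (d,r) by a sequence of p − i subdivision operations at path positions) equals the ballot number B(p−1, p−i). -/
/-- An arithmetical-structure candidate on `CT(p,s)`, given by its labels, normalized
so that all labels vanish outside the index ranges `1 ≤ i ≤ p` (path) and
`1 ≤ j ≤ s` (leaves). -/
structure CTStruct (p s : ℕ) : Type where
  d : ℕ → ℕ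
  r : ℕ → ℕ
  dl : ℕ → ℕ
  rl : ℕ → ℕ
  d_norm : ∀ i, ¬(1 ≤ i ∧ i ≤ p) → d i = 0
  r_norm : ∀ i, ¬(1 ≤ i ∧ i ≤ p) → r i = 0
  dl_norm : ∀ j, ¬(1 ≤ j ∧ j ≤ s) → dl j = 0
  rl_norm : ∀ j, ¬(1 ≤ j ∧ j ≤ s) → rl j = 0

/-- `A` is an arithmetical structure on `CT(p,s)`. -/
def CTStruct.IsArith {p s : ℕ} (A : CTStruct p s) : Prop :=
  IsCTArith p s A.d A.r A.dl A.rl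

/-- `A` is a smooth arithmetical structure labeling on `CT(p,s)`. -/
def CTStruct.IsSmooth {p s : ℕ} (A : CTStruct p s) : Prop :=
  IsCTSmooth p s A.d A.dl

/-- `B` on `CT(p+1,s)` is obtained from `A` on `CT(p,s)` by a subdivision at
position `i` (`1 ≤ i ≤ p`): for `i > 1` a new path vertex with `r`-value
`r_{i-1} + r_i` is inserted between `v_{i-1}` and `v_i`; for `i = 1` a new initial
vertex with `r`-value `r_1` is prepended.  Leaf labels are unchanged. -/
def SubdivAt {p s : ℕ} (i : ℕ) (A : CTStruct p s) (B : CTStruct (p + 1) s) : Prop :=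
  1 ≤ i ∧ i ≤ p ∧ B.dl = A.dl ∧ B.rl = A.rl ∧
  (∀ j, 1 ≤ j → j ≤ p + 1 →
    B.r j = if j ≤ i - 1 then A.r j
            else if j = i then (if i = 1 then A.r 1 else A.r (i - 1) + A.r i)
            else A.r (j - 1)) ∧
  (∀ j, 1 ≤ j → j ≤ p + 1 →
    B.d j = if j ≤ i - 2 then A.d j
            else if j = i - 1 then A.d (i - 1) + 1
            else if j = i then 1
            else if j = i + 1 then A.d i + 1
            else A.d (j - 1))

/-- `B` is a descendant of `A` if it is obtained from `A` by a finite sequence of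
subdivisions (at path positions). -/
inductive IsDescendant {s : ℕ} : ∀ {p q : ℕ}, CTStruct p s → CTStruct q s → Prop
  | refl {p : ℕ} (A : CTStruct p s) : IsDescendant A A
  | step {p q : ℕ} {A : CTStruct p s} {B : CTStruct q s} {C : CTStruct (q + 1) s}
      (i : ℕ) (hAB : IsDescendant A B) (hBC : SubdivAt i B C) : IsDescendant A C

/-- The ballot number `B(n,k) = ((n-k+1)/(n+1)) * choose (n+k) n`. -/
def ballot (n k : ℕ) : ℕ := (n - k + 1) * Nat.choose (n + k) n / (n + 1)

/-!
Read the path labels of a structure on `CT(q,s)` as the list `r_q, …, r_1, r_0 = 0`. A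
subdivision at position `j` inserts `r_{j-1} + r_j` between the adjacent entries `r_j` and
`r_{j-1}`, every gap of the list is available, and the leaves never change. Since an
arithmetical structure is determined by its `r`-labels, the descendants after `k` subdivisions
correspond bijectively to the lists obtained from this list by `k` such mediant insertions.

To count these lists, split off the first entry `y > 0`: insertions into the first gap
commute with all others, and each one strictly increases the second entry. Hence the lists
that never use the first gap and those that start with an insertion there are disjoint,
which yields the ballot recurrence `B(n+1,k+1) = B(n,k+1) + B(n+1,k)`, and
`B(k+1,k+1) = B(k+1,k)` when a single gap is left.
-/

theorem ballot_zero_right (n : ℕ) : ballot n 0 = 1 := by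
  simp [ballot]

theorem ballot_add_choose {n k : ℕ} (h : k ≤ n) :
    ballot n k + (n + k).choose (n + 1) = (n + k).choose n := by
  have hmul : (n + k).choose (n + 1) * (n + 1) = (n + k).choose n * k := by
    rw [Nat.choose_succ_right_eq, Nat.add_sub_cancel_left]
  have hle : (n + k).choose (n + 1) ≤ (n + k).choose n :=
    Nat.le_of_mul_le_mul_right (hmul ▸ Nat.mul_le_mul_left _ (by omega)) n.succ_pos
  suffices ballot n k = (n + k).choose n - (n + k).choose (n + 1) by omega
  apply Nat.div_eq_of_eq_mul_left n.succ_pos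
  rw [Nat.sub_mul, hmul, ← Nat.mul_sub, Nat.mul_comm, show n + 1 - k = n - k + 1 by omega]

theorem ballot_succ_succ {n k : ℕ} (h : k + 1 ≤ n) :
    ballot (n + 1) (k + 1) = ballot n (k + 1) + ballot (n + 1) k := by
  have h₁ := ballot_add_choose (show k + 1 ≤ n + 1 by omega)
  have h₂ := ballot_add_choose h
  have h₃ := ballot_add_choose (show k ≤ n + 1 by omega)
  rw [show n + 1 + (k + 1) = n + k + 1 + 1 by ring, Nat.choose_succ_succ' (n + k + 1) n,
    Nat.choose_succ_succ' (n + k + 1) (n + 1)] at h₁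
  rw [show n + (k + 1) = n + k + 1 by ring] at h₂
  rw [show n + 1 + k = n + k + 1 by ring] at h₃
  omega

theorem ballot_succ_self (n : ℕ) : ballot (n + 1) (n + 1) = ballot (n + 1) n := by
  have h₁ := ballot_add_choose (le_refl (n + 1))
  have h₂ := ballot_add_choose (show n ≤ n + 1 by omega)
  rw [show n + 1 + (n + 1) = 2 * n + 1 + 1 by ring, Nat.choose_succ_succ' (2 * n + 1) n,
    Nat.choose_succ_succ' (2 * n + 1) (n + 1), ← Nat.choose_symm_half] at h₁
  rw [show n + 1 + n = 2 * n + 1 by ring] at h₂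
  omega

inductive MediantStep : List ℕ → List ℕ → Prop
  | here (y x : ℕ) (t : List ℕ) : MediantStep (y :: x :: t) (y :: (x + y) :: x :: t)
  | cons (y : ℕ) {t t' : List ℕ} : MediantStep t t' → MediantStep (y :: t) (y :: t')

inductive MediantReach (l : List ℕ) : ℕ → List ℕ → Prop
  | refl : MediantReach l 0 l
  | tail {k : ℕ} {c b : List ℕ} :
      MediantReach l k c → MediantStep c b → MediantReach l (k + 1) b

namespace MediantStep

variable {x y : ℕ} {l l' t b : List ℕ}

theorem exists_eq_cons (h : MediantStep (y :: t) b) : ∃ t', b = y :: t' := by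
  cases h <;> exact ⟨_, rfl⟩

theorem not_singleton : ¬ MediantStep [x] b := by
  rintro (_ | ⟨_, ⟨⟩⟩)

theorem iff_insertIdx :
    MediantStep l l' ↔
      ∃ (i : ℕ) (h : i + 1 < l.length), l' = l.insertIdx (i + 1) (l[i + 1] + l[i]) := by
  constructor
  · intro h
    induction h with
    | here y x t => exact ⟨0, by simp, rfl⟩
    | cons y _ ih =>
      obtain ⟨i, hi, rfl⟩ := ih
      exact ⟨i + 1, by simpa using hi, by simp [List.insertIdx_succ_cons]⟩
  · rintro ⟨i, hi, rfl⟩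
    induction l generalizing i with
    | nil => simp at hi
    | cons y t ih =>
      obtain _ | i := i
      · obtain _ | ⟨x, t⟩ := t
        · simp at hi
        · exact here y x t
      · simpa [List.insertIdx_succ_cons] using cons y (ih i (by simpa using hi))

end MediantStep

namespace MediantReach

variable {k x y : ℕ} {l c t b : List ℕ}

theorem cons (y : ℕ) (h : MediantReach t k b) : MediantReach (y :: t) k (y :: b) := by
  induction h with
  | refl => exact refl
  | tail _ hs ih => exact ih.tail (hs.cons y)

theorem head (hs : MediantStep l c) (h : MediantReach c k b) : MediantReach l (k + 1) b := by
  induction h with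
  | refl => exact refl.tail hs
  | tail _ hs' ih => exact ih.tail hs'

theorem exists_eq_cons (h : MediantReach (y :: t) k b) : ∃ t', b = y :: t' := by
  induction h with
  | refl => exact ⟨t, rfl⟩
  | tail _ hs ih =>
    obtain ⟨t', rfl⟩ := ih
    exact hs.exists_eq_cons

theorem singleton (h : MediantReach [x] k b) : k = 0 ∧ b = [x] := by
  induction h with
  | refl => exact ⟨rfl, rfl⟩
  | tail _ hs ih =>
    obtain ⟨-, rfl⟩ := ih
    exact (MediantStep.not_singleton hs).elim

theorem exists_le_second (h : MediantReach (y :: x :: t) k b) :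
    ∃ x' t', b = y :: x' :: t' ∧ x ≤ x' := by
  induction h with
  | refl => exact ⟨x, t, rfl, le_rfl⟩
  | tail _ hs ih =>
    obtain ⟨x', t', rfl, hx⟩ := ih
    rcases hs with _ | ⟨_, hs⟩
    · exact ⟨_, _, rfl, by omega⟩
    · obtain ⟨t'', rfl⟩ := hs.exists_eq_cons
      exact ⟨x', t'', rfl, hx⟩

theorem cons_cons_cases (h : MediantReach (y :: x :: t) k b) :
    (∃ b', b = y :: b' ∧ MediantReach (x :: t) k b') ∨
      ∃ k', k = k' + 1 ∧ MediantReach (y :: (x + y) :: x :: t) k' b := by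
  induction h with
  | refl => exact Or.inl ⟨_, rfl, refl⟩
  | tail _ hs ih =>
    rcases ih with ⟨c, rfl, hc⟩ | ⟨k', rfl, hc⟩
    · rcases hs with _ | ⟨_, hs⟩
      · obtain ⟨t', ht'⟩ := hc.exists_eq_cons
        cases ht'
        exact Or.inr ⟨_, rfl, (hc.cons (x + y)).cons y⟩
      · exact Or.inl ⟨_, rfl, hc.tail hs⟩
    · exact Or.inr ⟨_, rfl, hc.tail hs⟩

end MediantReach

theorem setOf_mediantReach_zero (l : List ℕ) : {b | MediantReach l 0 b} = {l} := by
  ext b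
  exact ⟨fun h => by cases h; rfl, fun h => h ▸ MediantReach.refl⟩

theorem setOf_mediantReach_singleton (k x : ℕ) : {b | MediantReach [x] (k + 1) b} = ∅ :=
  Set.eq_empty_of_forall_notMem fun _ h => by simpa using h.singleton.1

theorem encard_setOf_mediantReach_succ_cons_cons (k : ℕ) {y : ℕ} (hy : 0 < y) (x : ℕ)
    (t : List ℕ) :
    {b | MediantReach (y :: x :: t) (k + 1) b}.encard =
      {b | MediantReach (x :: t) (k + 1) b}.encard +
        {b | MediantReach (y :: (x + y) :: x :: t) k b}.encard := by
  have hsplit : {b | MediantReach (y :: x :: t) (k + 1) b} =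
      (y :: ·) '' {b | MediantReach (x :: t) (k + 1) b} ∪
        {b | MediantReach (y :: (x + y) :: x :: t) k b} := by
    ext b
    constructor
    · intro h
      rcases h.cons_cons_cases with ⟨b', rfl, h'⟩ | ⟨k', hk, h'⟩
      · exact Or.inl ⟨b', h', rfl⟩
      · exact Or.inr (Nat.succ_injective hk ▸ h')
    · rintro (⟨b', h', rfl⟩ | h)
      · exact h'.cons y
      · exact MediantReach.head (.here y x t) h
  have hdisj : Disjoint ((y :: ·) '' {b | MediantReach (x :: t) (k + 1) b})
      {b | MediantReach (y :: (x + y) :: x :: t) k b} := by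
    rw [Set.disjoint_left]
    rintro _ ⟨b', h', rfl⟩ h
    obtain ⟨t', rfl⟩ := h'.exists_eq_cons
    obtain ⟨x', t'', he, hx⟩ := h.exists_le_second
    simp only [List.cons.injEq] at he
    omega
  rw [hsplit, Set.encard_union_eq hdisj, (List.cons_injective).encard_image]

theorem pos_of_mem_dropLast_add_cons {y x : ℕ} {t : List ℕ} (hy : 0 < y)
    (hpos : ∀ m ∈ (x :: t).dropLast, 0 < m) :
    ∀ m ∈ ((x + y) :: x :: t).dropLast, 0 < m := by
  rw [List.dropLast_cons_cons]
  rintro m (_ | ⟨_, hm⟩)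
  exacts [by omega, hpos m hm]

theorem encard_setOf_mediantReach_cons_cons (k : ℕ) {y x : ℕ} {t : List ℕ} (hy : 0 < y)
    (hpos : ∀ m ∈ (x :: t).dropLast, 0 < m) :
    {b | MediantReach (y :: x :: t) k b}.encard = ballot (t.length + k) k := by
  induction k generalizing y x t with
  | zero => simp [setOf_mediantReach_zero, ballot_zero_right]
  | succ k ih =>
    induction t generalizing y x with
    | nil =>
      rw [encard_setOf_mediantReach_succ_cons_cons k hy, setOf_mediantReach_singleton,
        Set.encard_empty, zero_add, ih hy (pos_of_mem_dropLast_add_cons hy hpos)]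
      simp [Nat.add_comm 1, ballot_succ_self]
    | cons z t ih' =>
      rw [encard_setOf_mediantReach_succ_cons_cons k hy,
        ih hy (pos_of_mem_dropLast_add_cons hy hpos)]
      rw [List.dropLast_cons_cons] at hpos
      rw [ih' (hpos x List.mem_cons_self) (fun m hm => hpos m (List.mem_cons_of_mem x hm))]
      norm_cast
      simp only [List.length_cons]
      rw [show t.length + 1 + (k + 1) = t.length + k + 1 + 1 by ring,
        ballot_succ_succ (by omega : k + 1 ≤ t.length + k + 1)]
      ring_nf

theorem encard_setOf_mediantReach (k : ℕ) {l : List ℕ} (hlen : 2 ≤ l.length)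
    (hpos : ∀ m ∈ l.dropLast, 0 < m) :
    {b | MediantReach l k b}.encard = ballot (l.length - 2 + k) k := by
  match l, hlen with
  | y :: x :: t, _ =>
    rw [List.dropLast_cons_cons] at hpos
    rw [encard_setOf_mediantReach_cons_cons k (hpos y List.mem_cons_self)
      (fun m hm => hpos m (List.mem_cons_of_mem y hm))]
    simp

namespace CTStruct

variable {p s : ℕ}

theorem ext {A B : CTStruct p s} (hd : A.d = B.d) (hr : A.r = B.r) (hdl : A.dl = B.dl)
    (hrl : A.rl = B.rl) : A = B := by
  cases A; cases B; simp_all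

theorem r_zero (A : CTStruct p s) : A.r 0 = 0 :=
  A.r_norm 0 (by omega)

theorem r_eq_zero_of_lt (A : CTStruct p s) {m : ℕ} (hm : p < m) : A.r m = 0 :=
  A.r_norm m (by omega)

theorem ite_neighbors_eq (A : CTStruct p s) {m : ℕ} (h1 : 1 ≤ m) (h2 : m ≤ p) :
    ((if 2 ≤ m then A.r (m - 1) else 0) + if m < p then A.r (m + 1) else 0) =
      A.r (m - 1) + A.r (m + 1) := by
  congr 1 <;> split_ifs with h
  · rfl
  · rw [show m - 1 = 0 by omega, A.r_zero]
  · rfl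
  · rw [A.r_eq_zero_of_lt (by omega)]

theorem IsArith.path_eq {A : CTStruct p s} (hA : A.IsArith) {m : ℕ} (h1 : 1 ≤ m)
    (h2 : m ≤ p) :
    A.d m * A.r m =
      A.r (m - 1) + A.r (m + 1) + if m = p then ∑ j ∈ Finset.Icc 1 s, A.rl j else 0 := by
  rw [hA.2.2.2.2.1 m h1 h2, A.ite_neighbors_eq h1 h2]

theorem IsArith.ext {A B : CTStruct p s} (hA : A.IsArith) (hB : B.IsArith) (hr : A.r = B.r)
    (hrl : A.rl = B.rl) : A = B := by
  refine CTStruct.ext (funext fun m => ?_) hr (funext fun t => ?_) hrl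
  · by_cases hm : 1 ≤ m ∧ m ≤ p
    · refine Nat.eq_of_mul_eq_mul_right (hB.2.1 m hm.1 hm.2) ?_
      have hAm := hA.path_eq hm.1 hm.2
      rw [hr, hrl] at hAm
      rw [hAm, hB.path_eq hm.1 hm.2]
    · rw [A.d_norm m hm, B.d_norm m hm]
  · by_cases ht : 1 ≤ t ∧ t ≤ s
    · refine Nat.eq_of_mul_eq_mul_right (hB.2.2.2.1 t ht.1 ht.2) ?_
      have hAt := hA.2.2.2.2.2.1 t ht.1 ht.2
      rw [hr, hrl] at hAt
      rw [hAt, hB.2.2.2.2.2.1 t ht.1 ht.2]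
    · rw [A.dl_norm t ht, B.dl_norm t ht]

theorem gcd_dvd_r (A : CTStruct p s) (m : ℕ) : (Finset.Icc 1 p).gcd A.r ∣ A.r m := by
  by_cases hm : 1 ≤ m ∧ m ≤ p
  · exact Finset.gcd_dvd (Finset.mem_Icc.2 hm)
  · rw [A.r_norm m hm]
    exact dvd_zero _

/-- Ending the list with `r 0 = 0` makes a subdivision at position `1` a mediant insertion
as well. -/
def rList (A : CTStruct p s) : List ℕ :=
  (List.range (p + 1)).reverse.map A.r

theorem length_rList (A : CTStruct p s) : A.rList.length = p + 1 := by
  simp [rList]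

theorem getElem_rList (A : CTStruct p s) {m : ℕ} (hm : m < A.rList.length) :
    A.rList[m] = A.r (p - m) := by
  simp [rList]

theorem r_eq_of_rList_eq {A B : CTStruct p s} (h : A.rList = B.rList) : A.r = B.r := by
  rw [rList, rList, List.map_inj_left] at h
  funext m
  by_cases hm : m ≤ p
  · exact h m (by simpa [Nat.lt_succ_iff] using hm)
  · rw [A.r_eq_zero_of_lt (by omega), B.r_eq_zero_of_lt (by omega)]

theorem IsArith.pos_of_mem_dropLast_rList {A : CTStruct p s} (hA : A.IsArith) :
    ∀ m ∈ A.rList.dropLast, 0 < m := by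
  intro m hm
  obtain ⟨n, hn, rfl⟩ := List.getElem_of_mem hm
  simp only [List.length_dropLast, length_rList] at hn
  rw [List.getElem_dropLast, getElem_rList]
  exact hA.2.1 _ (by omega) (by omega)

end CTStruct

theorem exists_subdivAt {p s : ℕ} (A : CTStruct p s) {j : ℕ} (hj : 1 ≤ j) (hjp : j ≤ p) :
    ∃ B, SubdivAt j A B :=
  ⟨{ d := fun m => if 1 ≤ m ∧ m ≤ p + 1 then
        (if m ≤ j - 2 then A.d m else if m = j - 1 then A.d (j - 1) + 1 else if m = j then 1
          else if m = j + 1 then A.d j + 1 else A.d (m - 1)) else 0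
     r := fun m => if 1 ≤ m ∧ m ≤ p + 1 then
        (if m ≤ j - 1 then A.r m else if m = j then (if j = 1 then A.r 1 else A.r (j - 1) + A.r j)
          else A.r (m - 1)) else 0
     dl := A.dl
     rl := A.rl
     d_norm := fun _ hm => if_neg hm
     r_norm := fun _ hm => if_neg hm
     dl_norm := A.dl_norm
     rl_norm := A.rl_norm },
    hj, hjp, rfl, rfl, fun _ h1 h2 => if_pos ⟨h1, h2⟩, fun _ h1 h2 => if_pos ⟨h1, h2⟩⟩

namespace SubdivAt

variable {p s j : ℕ} {A : CTStruct p s} {B : CTStruct (p + 1) s}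

theorem r_of_lt (h : SubdivAt j A B) {m : ℕ} (hm : m < j) : B.r m = A.r m := by
  rcases Nat.eq_zero_or_pos m with rfl | hm0
  · rw [B.r_zero, A.r_zero]
  · rw [h.2.2.2.2.1 m hm0 (by have := h.2.1; omega), if_pos (by omega)]

theorem r_self (h : SubdivAt j A B) : B.r j = A.r (j - 1) + A.r j := by
  obtain ⟨hj, hjp, -, -, hr, -⟩ := h
  rw [hr j hj (by omega), if_neg (by omega), if_pos rfl]
  split_ifs with hj1
  · rw [hj1, Nat.sub_self, A.r_zero, zero_add]
  · rfl

theorem r_of_gt (h : SubdivAt j A B) {m : ℕ} (hm : j < m) : B.r m = A.r (m - 1) := by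
  by_cases hmp : m ≤ p + 1
  · rw [h.2.2.2.2.1 m (by omega) hmp, if_neg (by omega), if_neg (by omega)]
  · rw [B.r_eq_zero_of_lt (by omega), A.r_eq_zero_of_lt (by omega)]

theorem gcd_r_eq (h : SubdivAt j A B) :
    (Finset.Icc 1 (p + 1)).gcd B.r = (Finset.Icc 1 p).gcd A.r := by
  apply Nat.dvd_antisymm
  · refine Finset.dvd_gcd fun m _ => ?_
    rcases lt_or_ge m j with hmj | hmj
    · exact h.r_of_lt hmj ▸ B.gcd_dvd_r m
    · simpa using h.r_of_gt (m := m + 1) (by omega) ▸ B.gcd_dvd_r (m + 1)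
  · refine Finset.dvd_gcd fun m _ => ?_
    rcases lt_trichotomy m j with hmj | rfl | hmj
    · exact h.r_of_lt hmj ▸ A.gcd_dvd_r m
    · exact h.r_self ▸ dvd_add (A.gcd_dvd_r _) (A.gcd_dvd_r _)
    · exact h.r_of_gt hmj ▸ A.gcd_dvd_r _

theorem path_eq (h : SubdivAt j A B) (hA : A.IsArith) {m : ℕ} (h1 : 1 ≤ m) (h2 : m ≤ p + 1) :
    B.d m * B.r m =
      B.r (m - 1) + B.r (m + 1) + if m = p + 1 then ∑ t ∈ Finset.Icc 1 s, A.rl t else 0 := by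
  have hj := h.1
  have hjp := h.2.1
  rw [h.2.2.2.2.2 m h1 h2]
  obtain hm | rfl | rfl | rfl | hm :
      m + 2 ≤ j ∨ m + 1 = j ∨ m = j ∨ m = j + 1 ∨ j + 1 < m := by omega
  · rw [if_pos (by omega), h.r_of_lt (by omega), h.r_of_lt (by omega), h.r_of_lt (by omega),
      hA.path_eq h1 (by omega), if_neg (by omega), if_neg (by omega)]
  · rw [if_neg (by omega), if_pos (by omega), h.r_of_lt (by omega), h.r_of_lt (by omega),
      h.r_self, Nat.add_sub_cancel, add_one_mul, hA.path_eq h1 (by omega), if_neg (by omega),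
      if_neg (by omega)]
    ring
  · rw [if_neg (by omega), if_neg (by omega), if_pos rfl, h.r_self, h.r_of_lt (by omega),
      h.r_of_gt (by omega), if_neg (by omega)]
    simp
  · rw [if_neg (by omega), if_neg (by omega), if_neg (by omega), if_pos rfl, Nat.add_sub_cancel,
      h.r_self, h.r_of_gt (by omega), h.r_of_gt (by omega), Nat.add_sub_cancel, add_one_mul,
      hA.path_eq hj hjp]
    simp only [Nat.add_right_cancel_iff, Nat.add_sub_cancel]
    ring
  · obtain ⟨m, rfl⟩ : ∃ m', m = m' + 1 := ⟨m - 1, by omega⟩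
    rw [if_neg (by omega), if_neg (by omega), if_neg (by omega), if_neg (by omega),
      h.r_of_gt (by omega), h.r_of_gt (by omega), h.r_of_gt (by omega),
      hA.path_eq (by omega) (by omega)]
    simp only [Nat.add_right_cancel_iff, Nat.add_sub_cancel]

theorem isArith (h : SubdivAt j A B) (hA : A.IsArith) : B.IsArith := by
  obtain ⟨hj, hjp, hdl, hrl, -, hd⟩ := id h
  obtain ⟨hdpos, hrpos, hdlpos, hrlpos, -, hleaf, hgcd⟩ := id hA
  refine ⟨fun m h1 h2 => ?_, fun m h1 h2 => ?_, hdl ▸ hdlpos, hrl ▸ hrlpos,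
    fun m h1 h2 => ?_, fun t h1 h2 => ?_, ?_⟩
  · rw [hd m h1 h2]
    split_ifs <;> first | omega | exact hdpos _ (by omega) (by omega)
  · rcases lt_trichotomy m j with hmj | rfl | hmj
    · exact h.r_of_lt hmj ▸ hrpos m h1 (by omega)
    · have := hrpos m h1 hjp
      rw [h.r_self]
      omega
    · exact h.r_of_gt hmj ▸ hrpos _ (by omega) (by omega)
  · rw [B.ite_neighbors_eq h1 h2, hrl, h.path_eq hA h1 h2]
  · rw [hdl, hrl, hleaf t h1 h2, h.r_of_gt (by omega), Nat.add_sub_cancel]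
  · rw [h.gcd_r_eq, hrl]
    exact hgcd

theorem rList_eq (h : SubdivAt j A B) :
    B.rList = A.rList.insertIdx (p - j + 1) (A.r (j - 1) + A.r j) := by
  have hj := h.1
  have hjp := h.2.1
  apply List.ext_getElem
  · simp only [CTStruct.length_rList, List.length_insertIdx]
    split_ifs <;> omega
  intro m h₁ h₂
  rw [CTStruct.length_rList] at h₁
  rw [List.getElem_insertIdx, CTStruct.getElem_rList]
  split_ifs with hm hm'
  · rw [CTStruct.getElem_rList, h.r_of_gt (by omega)]
    congr 1
    omega
  · rw [hm', show p + 1 - (p - j + 1) = j by omega, h.r_self]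
  · rw [CTStruct.getElem_rList, h.r_of_lt (by omega)]
    congr 1
    omega

theorem mediantStep_rList (h : SubdivAt j A B) : MediantStep A.rList B.rList := by
  have hj := h.1
  have hjp := h.2.1
  refine MediantStep.iff_insertIdx.2 ⟨p - j, by simp [CTStruct.length_rList]; omega, ?_⟩
  rw [h.rList_eq, CTStruct.getElem_rList, CTStruct.getElem_rList,
    show p - (p - j + 1) = j - 1 by omega, show p - (p - j) = j by omega]

end SubdivAt

theorem exists_subdivAt_of_mediantStep {p s : ℕ} {A : CTStruct p s} {c : List ℕ}
    (h : MediantStep A.rList c) : ∃ j, ∃ B, SubdivAt j A B ∧ B.rList = c := by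
  obtain ⟨i, hi, rfl⟩ := MediantStep.iff_insertIdx.1 h
  rw [CTStruct.length_rList] at hi
  obtain ⟨B, hB⟩ := exists_subdivAt A (j := p - i) (by omega) (by omega)
  refine ⟨p - i, B, hB, ?_⟩
  rw [hB.rList_eq, CTStruct.getElem_rList, CTStruct.getElem_rList,
    show p - (p - i) = i by omega, show p - (i + 1) = p - i - 1 by omega]

namespace IsDescendant

variable {s i q : ℕ} {A : CTStruct i s} {B : CTStruct q s}

theorem rl_eq (h : IsDescendant A B) : B.rl = A.rl := by
  induction h with
  | refl => rfl
  | step _ _ hBC ih => exact hBC.2.2.2.1.trans ih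

theorem isArith (h : IsDescendant A B) (hA : A.IsArith) : B.IsArith := by
  induction h with
  | refl => exact hA
  | step _ _ hBC ih => exact hBC.isArith (ih hA)

theorem mediantReach (h : IsDescendant A B) : i ≤ q ∧ MediantReach A.rList (q - i) B.rList := by
  induction h with
  | refl => exact ⟨le_rfl, by simpa using MediantReach.refl⟩
  | step _ _ hBC ih =>
    obtain ⟨hle, hreach⟩ := ih
    exact ⟨by omega, Nat.sub_add_comm hle ▸ hreach.tail hBC.mediantStep_rList⟩

end IsDescendant

section Descendants

variable {s i : ℕ} {A : CTStruct i s}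

theorem exists_isDescendant_of_mediantReach {k : ℕ} {b : List ℕ}
    (h : MediantReach A.rList k b) :
    ∃ B : CTStruct (i + k) s, IsDescendant A B ∧ B.rList = b := by
  induction h with
  | refl => exact ⟨A, .refl A, rfl⟩
  | tail _ hs ih =>
    obtain ⟨B, hB, rfl⟩ := ih
    obtain ⟨j, C, hC, rfl⟩ := exists_subdivAt_of_mediantStep hs
    exact ⟨C, hB.step j hC, rfl⟩

theorem image_rList_setOf_isDescendant (hA : A.IsArith) (k : ℕ) :
    CTStruct.rList '' {B : CTStruct (i + k) s | B.IsArith ∧ IsDescendant A B} =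
      {b | MediantReach A.rList k b} := by
  ext b
  constructor
  · rintro ⟨B, ⟨-, hB⟩, rfl⟩
    simpa using hB.mediantReach.2
  · intro hb
    obtain ⟨B, hB, rfl⟩ := exists_isDescendant_of_mediantReach hb
    exact ⟨B, ⟨hB.isArith hA, hB⟩, rfl⟩

theorem injOn_rList_setOf_isDescendant (A : CTStruct i s) (q : ℕ) :
    Set.InjOn CTStruct.rList {B : CTStruct q s | B.IsArith ∧ IsDescendant A B} :=
  fun _ h₁ _ h₂ h =>
    h₁.1.ext h₂.1 (CTStruct.r_eq_of_rList_eq h) (h₁.2.rl_eq.trans h₂.2.rl_eq.symm)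

end Descendants

theorem ct_count_descendants_general (s i p : ℕ) (hi1 : 1 ≤ i) (hip : i ≤ p)
    (A : CTStruct i s) (hA : A.IsArith) :
    Nat.card {B : CTStruct p s // B.IsArith ∧ IsDescendant A B} =
      ballot (p - 1) (p - i) := by
  obtain ⟨k, rfl⟩ := Nat.exists_eq_add_of_le hip
  have hcount := encard_setOf_mediantReach k (l := A.rList) (by rw [A.length_rList]; omega)
    hA.pos_of_mem_dropLast_rList
  rw [← image_rList_setOf_isDescendant hA, (injOn_rList_setOf_isDescendant A _).encard_image,
    A.length_rList] at hcount
  rw [← Set.coe_ofPred, Nat.card_coe_set_eq, Set.ncard_def, hcount, ENat.toNat_natCast]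
  congr 1 <;> omega

/-- Proposition: counting descendants.  Fix `s ≥ 2`, let
`1 ≤ i ≤ p`, and let `A` be a smooth arithmetical structure on `CT(i,s)`.  The
number of arithmetical structures on `CT(p,s)` that are descendants of `A` equals
the ballot number `B(p-1, p-i)`. -/
theorem ct_count_descendants (s i p : ℕ) (hs : 2 ≤ s) (hi1 : 1 ≤ i) (hip : i ≤ p)
    (A : CTStruct i s) (hA : A.IsArith) (hAsm : A.IsSmooth) :
    Nat.card {B : CTStruct p s // B.IsArith ∧ IsDescendant A B} =
      ballot (p - 1) (p - i) :=
  ct_count_descendants_general s i p hi1 hip A hA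
end

section
/- Let p ≥ 1 and s ≥ 1 be integers. Every arithmetical structure on CT(p,s) with d_{ℓ_1}, …, d_{ℓ_s} ≥ 2 has a unique smooth arithmetical structure on CT(q,s) as an ancestor, for some q with 1 ≤ q ≤ p. -/
/-- A coconut-tree labeling together with its parameters `p` and `s`. -/
abbrev CTS : Type := Σ p : ℕ, Σ s : ℕ, CTStruct p s

/-- `Y` is obtained from `X` by one smoothing operation: removal of a path vertex
`v_i` of degree 2 (`2 ≤ i ≤ p-1`) with `d_i = 1`, removal of the degree-1 path
vertex `v_1` with `d_1 = 1` (when `p ≥ 2`), or removal of a leaf `ℓ_i` with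
`d_{ℓ_i} = 1`; in each case the `d`-values of the affected neighbors decrease
by `1` and all remaining labels are kept (suitably reindexed). -/
def SmoothStep (X Y : CTS) : Prop :=
  -- smoothing at a path vertex v_i of degree 2, where 2 ≤ i ≤ p - 1 and d_i = 1
  (∃ i, 2 ≤ i ∧ i + 1 ≤ X.1 ∧ X.1 = Y.1 + 1 ∧ X.2.1 = Y.2.1 ∧
    X.2.2.d i = 1 ∧
    (∀ j, 1 ≤ j → j ≤ Y.2.1 → Y.2.2.rl j = X.2.2.rl j ∧ Y.2.2.dl j = X.2.2.dl j) ∧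
    (∀ j, 1 ≤ j → j ≤ Y.1 →
      Y.2.2.r j = (if j ≤ i - 1 then X.2.2.r j else X.2.2.r (j + 1)) ∧
      Y.2.2.d j = (if j ≤ i - 2 then X.2.2.d j
                   else if j = i - 1 then X.2.2.d (i - 1) - 1
                   else if j = i then X.2.2.d (i + 1) - 1
                   else X.2.2.d (j + 1)))) ∨
  -- smoothing at the degree-1 path vertex v_1, where p ≥ 2 and d_1 = 1
  (2 ≤ X.1 ∧ X.1 = Y.1 + 1 ∧ X.2.1 = Y.2.1 ∧ X.2.2.d 1 = 1 ∧
    (∀ j, 1 ≤ j → j ≤ Y.2.1 → Y.2.2.rl j = X.2.2.rl j ∧ Y.2.2.dl j = X.2.2.dl j) ∧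
    (∀ j, 1 ≤ j → j ≤ Y.1 →
      Y.2.2.r j = X.2.2.r (j + 1) ∧
      Y.2.2.d j = (if j = 1 then X.2.2.d 2 - 1 else X.2.2.d (j + 1)))) ∨
  -- smoothing at a leaf ℓ_i, where 1 ≤ i ≤ s and dl_i = 1
  (∃ i, 1 ≤ i ∧ i ≤ X.2.1 ∧ X.1 = Y.1 ∧ X.2.1 = Y.2.1 + 1 ∧
    X.2.2.dl i = 1 ∧
    (∀ j, 1 ≤ j → j ≤ Y.1 →
      Y.2.2.r j = X.2.2.r j ∧
      Y.2.2.d j = (if j = Y.1 then X.2.2.d j - 1 else X.2.2.d j)) ∧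
    (∀ j, 1 ≤ j → j ≤ Y.2.1 →
      Y.2.2.rl j = (if j ≤ i - 1 then X.2.2.rl j else X.2.2.rl (j + 1)) ∧
      Y.2.2.dl j = (if j ≤ i - 1 then X.2.2.dl j else X.2.2.dl (j + 1))))

lemma CTStruct.ext' {p s : ℕ} {A B : CTStruct p s}
    (hd : ∀ i, 1 ≤ i → i ≤ p → A.d i = B.d i)
    (hr : ∀ i, 1 ≤ i → i ≤ p → A.r i = B.r i)
    (hdl : ∀ j, 1 ≤ j → j ≤ s → A.dl j = B.dl j)
    (hrl : ∀ j, 1 ≤ j → j ≤ s → A.rl j = B.rl j) : A = B := by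
  have h1 : A.d = B.d := funext fun i => by
    by_cases h : 1 ≤ i ∧ i ≤ p
    · exact hd i h.1 h.2
    · rw [A.d_norm i h, B.d_norm i h]
  have h2 : A.r = B.r := funext fun i => by
    by_cases h : 1 ≤ i ∧ i ≤ p
    · exact hr i h.1 h.2
    · rw [A.r_norm i h, B.r_norm i h]
  have h3 : A.dl = B.dl := funext fun j => by
    by_cases h : 1 ≤ j ∧ j ≤ s
    · exact hdl j h.1 h.2
    · rw [A.dl_norm j h, B.dl_norm j h]
  have h4 : A.rl = B.rl := funext fun j => by
    by_cases h : 1 ≤ j ∧ j ≤ s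
    · exact hrl j h.1 h.2
    · rw [A.rl_norm j h, B.rl_norm j h]
  cases A; cases B
  simp only at h1 h2 h3 h4
  subst h1 h2 h3 h4
  rfl

/-- Result of smoothing the path vertex `v_i` (for `1 ≤ i ≤ p - 1`). -/
def smoothAt {p s : ℕ} (A : CTStruct p s) (i : ℕ) : CTStruct (p - 1) s where
  d j := if 1 ≤ j ∧ j ≤ p - 1 then
      (if j ≤ i - 2 then A.d j else if j = i - 1 then A.d (i - 1) - 1
       else if j = i then A.d (i + 1) - 1 else A.d (j + 1)) else 0
  r j := if 1 ≤ j ∧ j ≤ p - 1 then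
      (if j ≤ i - 1 then A.r j else A.r (j + 1)) else 0
  dl := A.dl
  rl := A.rl
  d_norm := fun j h => by simp only [if_neg h]
  r_norm := fun j h => by simp only [if_neg h]
  dl_norm := A.dl_norm
  rl_norm := A.rl_norm

lemma smoothAt_r {p s : ℕ} (A : CTStruct p s) (i j : ℕ) (h1 : 1 ≤ j) (h2 : j ≤ p - 1) :
    (smoothAt A i).r j = if j ≤ i - 1 then A.r j else A.r (j + 1) := by
  simp only [smoothAt, if_pos (And.intro h1 h2)]

lemma smoothAt_d {p s : ℕ} (A : CTStruct p s) (i j : ℕ) (h1 : 1 ≤ j) (h2 : j ≤ p - 1) :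
    (smoothAt A i).d j = (if j ≤ i - 2 then A.d j else if j = i - 1 then A.d (i - 1) - 1
       else if j = i then A.d (i + 1) - 1 else A.d (j + 1)) := by
  simp only [smoothAt, if_pos (And.intro h1 h2)]

lemma sum_rl_pos {p s : ℕ} (A : CTStruct p s) (hs : 1 ≤ s)
    (hrl : ∀ j, 1 ≤ j → j ≤ s → 0 < A.rl j) : 0 < ∑ j ∈ Finset.Icc 1 s, A.rl j :=
  Finset.sum_pos (fun j hj => by
    rw [Finset.mem_Icc] at hj; exact hrl j hj.1 hj.2)
    ⟨1, by simp [Finset.mem_Icc, hs]⟩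

lemma no_adj {p s : ℕ} {A : CTStruct p s} (hs : 1 ≤ s) (hA : A.IsArith)
    {i : ℕ} (hi1 : 1 ≤ i) (hi2 : i + 1 ≤ p) (h1 : A.d i = 1) : A.d (i + 1) ≠ 1 := by
  obtain ⟨hd, hr, hdl, hrl, hEq, hLeaf, hGcd⟩ := hA
  intro h2
  have e1 := hEq i hi1 (by omega)
  have e2 := hEq (i + 1) (by omega) hi2
  rw [h1, one_mul] at e1
  rw [h2, one_mul] at e2
  simp only [show i + 1 - 1 = i from by omega, show i + 1 + 1 = i + 2 from by omega] at e2
  have hS := sum_rl_pos A hs hrl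
  by_cases hip : i + 1 < p
  · have hp2 : 0 < A.r (i + 2) := hr (i + 2) (by omega) (by omega)
    have hp1 : 0 < A.r (i + 1) := hr (i + 1) (by omega) (by omega)
    split_ifs at e1 e2 <;> omega
  · split_ifs at e1 e2 <;> omega


lemma smoothAt_r' {p s : ℕ} (A : CTStruct p s) (i j : ℕ) :
    (smoothAt A i).r j = if 1 ≤ j ∧ j ≤ p - 1 then
      (if j ≤ i - 1 then A.r j else A.r (j + 1)) else 0 := rfl

lemma smoothAt_d' {p s : ℕ} (A : CTStruct p s) (i j : ℕ) :
    (smoothAt A i).d j = if 1 ≤ j ∧ j ≤ p - 1 then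
      (if j ≤ i - 2 then A.d j else if j = i - 1 then A.d (i - 1) - 1
       else if j = i then A.d (i + 1) - 1 else A.d (j + 1)) else 0 := rfl

lemma smoothAt_rl' {p s : ℕ} (A : CTStruct p s) (i j : ℕ) :
    (smoothAt A i).rl j = A.rl j := rfl

lemma arith_smoothAt {p s : ℕ} {A : CTStruct p s} (hs : 1 ≤ s) (hA : A.IsArith)
    {i : ℕ} (hi1 : 1 ≤ i) (hi2 : i + 1 ≤ p) (hdi : A.d i = 1) :
    (smoothAt A i).IsArith := by
  obtain ⟨hd, hr, hdl, hrl, hEq, hLeaf, hGcd⟩ := id hA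
  have hd_right : 2 ≤ A.d (i + 1) := by
    have h1 := no_adj hs hA hi1 hi2 hdi
    have h2 := hd (i + 1) (by omega) (by omega)
    omega
  have hd_left : 2 ≤ i → 2 ≤ A.d (i - 1) := by
    intro h2i
    rcases Nat.lt_or_ge (A.d (i - 1)) 2 with h | h
    · have h1 : A.d (i - 1) = 1 := by have := hd (i - 1) (by omega) (by omega); omega
      have h2 := no_adj hs hA (i := i - 1) (by omega) (by omega) h1
      rw [show i - 1 + 1 = i from by omega] at h2
      exact absurd hdi h2
    · exact h
  have e0 := hEq i hi1 (by omega)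
  rw [hdi, one_mul, if_pos (show i < p from by omega),
    if_neg (show ¬ i = p from by omega), add_zero] at e0
  -- e0 : A.r i = (if 2 ≤ i then A.r (i-1) else 0) + A.r (i+1)
  refine ⟨?_, ?_, hdl, hrl, ?_, ?_, ?_⟩
  · intro j hj1 hj2
    rw [smoothAt_d A i j hj1 hj2]
    split_ifs with h1 h2 h3
    · exact hd j hj1 (by omega)
    · have := hd_left (by omega); omega
    · omega
    · exact hd (j + 1) (by omega) (by omega)
  · intro j hj1 hj2
    rw [smoothAt_r A i j hj1 hj2]
    split_ifs
    · exact hr j hj1 (by omega)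
    · exact hr (j + 1) (by omega) (by omega)
  · intro j hj1 hj2
    simp only [smoothAt_rl']
    by_cases hc1 : j ≤ i - 2
    · -- j strictly left of i-1 : nothing changes
      have ej := hEq j hj1 (by omega)
      rw [smoothAt_d A i j hj1 hj2, if_pos hc1, smoothAt_r A i j hj1 hj2,
        if_pos (show j ≤ i - 1 from by omega),
        if_pos (show j < p - 1 from by omega),
        smoothAt_r A i (j + 1) (by omega) (by omega),
        if_pos (show j + 1 ≤ i - 1 from by omega),
        if_neg (show ¬ j = p - 1 from by omega)]
      by_cases h2j : 2 ≤ j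
      · rw [if_pos h2j, smoothAt_r A i (j - 1) (by omega) (by omega),
          if_pos (show j - 1 ≤ i - 1 from by omega)]
        split_ifs at ej <;> omega
      · rw [if_neg h2j]
        split_ifs at ej <;> omega
    · by_cases hc2 : j = i - 1
      · -- j = i - 1 : left neighbor of the smoothed vertex
        subst hc2
        have h2i : 2 ≤ i := by omega
        have ej := hEq (i - 1) (by omega) (by omega)
        simp only [show i - 1 + 1 = i from by omega] at ej
        rw [if_pos h2i] at e0
        rw [smoothAt_d A i (i - 1) (by omega) (by omega),
          if_neg (show ¬ i - 1 ≤ i - 2 from by omega), if_pos rfl,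
          smoothAt_r A i (i - 1) (by omega) (by omega), if_pos (le_refl _),
          if_pos (show i - 1 < p - 1 from by omega),
          show i - 1 + 1 = i from by omega,
          smoothAt_r A i i (by omega) (by omega),
          if_neg (show ¬ i ≤ i - 1 from by omega),
          if_neg (show ¬ i - 1 = p - 1 from by omega), Nat.sub_one_mul]
        by_cases h3 : 2 ≤ i - 1
        · rw [if_pos h3, smoothAt_r A i (i - 1 - 1) (by omega) (by omega),
            if_pos (show i - 1 - 1 ≤ i - 1 from by omega)]
          split_ifs at ej <;> omega
        · rw [if_neg h3]
          split_ifs at ej <;> omega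
      · by_cases hc3 : j = i
        · -- j = j : right neighbor (shifted) of the smoothed vertex
          subst hc3
          have ej1 := hEq (j + 1) (by omega) (by omega)
          simp only [show j + 1 - 1 = j from by omega,
            show j + 1 + 1 = j + 2 from by omega] at ej1
          rw [smoothAt_d A j j (by omega) (by omega),
            if_neg (show ¬ j ≤ j - 2 from by omega),
            if_neg (show ¬ j = j - 1 from by omega), if_pos rfl,
            smoothAt_r A j j (by omega) (by omega),
            if_neg (show ¬ j ≤ j - 1 from by omega), Nat.sub_one_mul]
          by_cases h2i : 2 ≤ j
          · rw [if_pos h2i] at e0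
            rw [if_pos h2i, smoothAt_r A j (j - 1) (by omega) (by omega),
              if_pos (le_refl _)]
            by_cases hip : j < p - 1
            · rw [if_pos hip, smoothAt_r A j (j + 1) (by omega) (by omega),
                if_neg (show ¬ j + 1 ≤ j - 1 from by omega),
                show j + 1 + 1 = j + 2 from by omega,
                if_neg (show ¬ j = p - 1 from by omega)]
              split_ifs at ej1 <;> omega
            · rw [if_neg hip, if_pos (show j = p - 1 from by omega)]
              split_ifs at ej1 <;> omega
          · rw [if_neg h2i] at e0
            rw [if_neg h2i]
            by_cases hip : j < p - 1
            · rw [if_pos hip, smoothAt_r A j (j + 1) (by omega) (by omega),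
                if_neg (show ¬ j + 1 ≤ j - 1 from by omega),
                show j + 1 + 1 = j + 2 from by omega,
                if_neg (show ¬ j = p - 1 from by omega)]
              split_ifs at ej1 <;> omega
            · rw [if_neg hip, if_pos (show j = p - 1 from by omega)]
              split_ifs at ej1 <;> omega
        · -- j ≥ i + 1 : vertices shifted down by one
          have hji : i + 1 ≤ j := by omega
          have ej1 := hEq (j + 1) (by omega) (by omega)
          simp only [show j + 1 - 1 = j from by omega,
            show j + 1 + 1 = j + 2 from by omega] at ej1
          rw [smoothAt_d A i j hj1 hj2, if_neg (show ¬ j ≤ i - 2 from by omega),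
            if_neg (show ¬ j = i - 1 from by omega),
            if_neg (show ¬ j = i from by omega),
            smoothAt_r A i j hj1 hj2, if_neg (show ¬ j ≤ i - 1 from by omega),
            if_pos (show 2 ≤ j from by omega),
            smoothAt_r A i (j - 1) (by omega) (by omega),
            if_neg (show ¬ j - 1 ≤ i - 1 from by omega),
            show j - 1 + 1 = j from by omega]
          by_cases hjp : j < p - 1
          · rw [if_pos hjp, smoothAt_r A i (j + 1) (by omega) (by omega),
              if_neg (show ¬ j + 1 ≤ i - 1 from by omega),
              show j + 1 + 1 = j + 2 from by omega,
              if_neg (show ¬ j = p - 1 from by omega)]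
            split_ifs at ej1 <;> omega
          · rw [if_neg hjp, if_pos (show j = p - 1 from by omega)]
            split_ifs at ej1 <;> omega
  · intro j hj1 hj2
    show A.dl j * A.rl j = _
    rw [smoothAt_r A i (p - 1) (by omega) (le_refl _),
      if_neg (show ¬ (p - 1 ≤ i - 1) from by omega),
      show p - 1 + 1 = p from by omega]
    exact hLeaf j hj1 hj2
  · have hdvd : ((Finset.Icc 1 (p - 1)).gcd (smoothAt A i).r).gcd
        ((Finset.Icc 1 s).gcd (smoothAt A i).rl) ∣
        ((Finset.Icc 1 p).gcd A.r).gcd ((Finset.Icc 1 s).gcd A.rl) := by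
      apply Nat.dvd_gcd
      · apply Finset.dvd_gcd
        intro b hb
        rw [Finset.mem_Icc] at hb
        have key : ∀ k, 1 ≤ k → k ≤ p - 1 →
            Nat.gcd ((Finset.Icc 1 (p-1)).gcd (smoothAt A i).r)
              ((Finset.Icc 1 s).gcd (smoothAt A i).rl) ∣ (smoothAt A i).r k :=
          fun k hk1 hk2 => dvd_trans (Nat.gcd_dvd_left _ _)
            (Finset.gcd_dvd (Finset.mem_Icc.mpr ⟨hk1, hk2⟩))
        by_cases hb1 : b ≤ i - 1
        · have := key b hb.1 (by omega)
          rwa [smoothAt_r A i b hb.1 (by omega), if_pos hb1] at this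
        · by_cases hb2 : b = i
          · subst hb2
            rw [e0]
            apply dvd_add
            · split_ifs with h2i
              · have := key (b - 1) (by omega) (by omega)
                rwa [smoothAt_r A b (b - 1) (by omega) (by omega),
                  if_pos (by omega)] at this
              · exact dvd_zero _
            · have := key b hb.1 (by omega)
              rwa [smoothAt_r A b b (by omega) (by omega), if_neg (by omega)] at this
          · have := key (b - 1) (by omega) (by omega)
            rwa [smoothAt_r A i (b - 1) (by omega) (by omega), if_neg (by omega),
              show b - 1 + 1 = b from by omega] at this
      · exact Nat.gcd_dvd_right _ _
    rw [hGcd] at hdvd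
    exact Nat.dvd_one.mp hdvd


lemma step_iff {p s : ℕ} {A : CTStruct p s} (hdl : ∀ j, 1 ≤ j → j ≤ s → 2 ≤ A.dl j)
    (Y : CTS) :
    SmoothStep ⟨p, s, A⟩ Y ↔
      ∃ i, 1 ≤ i ∧ i + 1 ≤ p ∧ A.d i = 1 ∧ Y = ⟨p - 1, s, smoothAt A i⟩ := by
  constructor
  · intro h
    obtain ⟨q, t, C⟩ := Y
    rcases h with ⟨i, h2i, hip, hpq, hst, hdi, hleaf, hpath⟩ |
      ⟨hp2, hpq, hst, hdi, hleaf, hpath⟩ |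
      ⟨i, hi1, his, hpq, hst, hdli, hpath, hleaf⟩
    · have hpq' : p = q + 1 := hpq
      have hip' : i + 1 ≤ p := hip
      obtain rfl : q = p - 1 := by omega
      obtain rfl : s = t := hst
      refine ⟨i, by omega, hip', hdi, ?_⟩
      have hC : C = smoothAt A i := by
        apply CTStruct.ext'
        · intro j hj1 hj2
          rw [smoothAt_d A i j hj1 hj2]
          exact (hpath j hj1 hj2).2
        · intro j hj1 hj2
          rw [smoothAt_r A i j hj1 hj2]
          exact (hpath j hj1 hj2).1
        · intro j hj1 hj2
          exact (hleaf j hj1 hj2).2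
        · intro j hj1 hj2
          exact (hleaf j hj1 hj2).1
      exact congrArg (fun Z => (⟨p - 1, s, Z⟩ : CTS)) hC
    · have hpq' : p = q + 1 := hpq
      have hp2' : 2 ≤ p := hp2
      obtain rfl : q = p - 1 := by omega
      obtain rfl : s = t := hst
      refine ⟨1, le_refl _, by omega, hdi, ?_⟩
      have hC : C = smoothAt A 1 := by
        apply CTStruct.ext'
        · intro j hj1 hj2
          rw [smoothAt_d A 1 j hj1 hj2, if_neg (show ¬ j ≤ 1 - 2 from by omega),
            if_neg (show ¬ j = 1 - 1 from by omega), (hpath j hj1 hj2).2]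
        · intro j hj1 hj2
          rw [smoothAt_r A 1 j hj1 hj2, if_neg (show ¬ j ≤ 1 - 1 from by omega)]
          exact (hpath j hj1 hj2).1
        · intro j hj1 hj2
          exact (hleaf j hj1 hj2).2
        · intro j hj1 hj2
          exact (hleaf j hj1 hj2).1
      exact congrArg (fun Z => (⟨p - 1, s, Z⟩ : CTS)) hC
    · have his' : i ≤ s := his
      have hdli' : A.dl i = 1 := hdli
      exact absurd hdli' (by have := hdl i hi1 his'; omega)
  · rintro ⟨i, hi1, hip, hdi, rfl⟩
    by_cases h2i : 2 ≤ i
    · left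
      refine ⟨i, h2i, hip, show p = p - 1 + 1 from by omega, rfl, hdi,
        fun j hj1 hj2 => ⟨rfl, rfl⟩, ?_⟩
      intro j hj1 hj2
      exact ⟨smoothAt_r A i j hj1 hj2, smoothAt_d A i j hj1 hj2⟩
    · right; left
      obtain rfl : i = 1 := by omega
      refine ⟨show 2 ≤ p from by omega, show p = p - 1 + 1 from by omega, rfl, hdi,
        fun j hj1 hj2 => ⟨rfl, rfl⟩, ?_⟩
      intro j hj1 hj2
      constructor
      · rw [smoothAt_r A 1 j hj1 hj2, if_neg (show ¬ j ≤ 1 - 1 from by omega)]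
      · rw [smoothAt_d A 1 j hj1 hj2, if_neg (show ¬ j ≤ 1 - 2 from by omega),
          if_neg (show ¬ j = 1 - 1 from by omega)]

lemma normal_of_smooth {p s : ℕ} {A : CTStruct p s}
    (hsm : A.IsSmooth) (hdl : ∀ j, 1 ≤ j → j ≤ s → 2 ≤ A.dl j)
    (Y : CTS) : ¬ SmoothStep ⟨p, s, A⟩ Y := by
  intro h
  rw [step_iff hdl] at h
  obtain ⟨i, hi1, hip, hdi, -⟩ := h
  have := hsm.1 i hi1 (by omega)
  omega

lemma smooth_comm {p s : ℕ} (A : CTStruct p s) {i k : ℕ} (hi1 : 1 ≤ i)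
    (hgap : i + 2 ≤ k) (hkp : k + 1 ≤ p) :
    smoothAt (smoothAt A i) (k - 1) = smoothAt (smoothAt A k) i := by
  apply CTStruct.ext'
  · intro j hj1 hj2
    by_cases c1 : j ≤ i - 2
    · rw [smoothAt_d (smoothAt A i) (k - 1) j hj1 hj2,
        if_pos (show j ≤ k - 1 - 2 from by omega),
        smoothAt_d A i j hj1 (by omega), if_pos c1,
        smoothAt_d (smoothAt A k) i j hj1 hj2, if_pos c1,
        smoothAt_d A k j hj1 (by omega), if_pos (show j ≤ k - 2 from by omega)]
    · by_cases c2 : j = i - 1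
      · rw [smoothAt_d (smoothAt A i) (k - 1) j hj1 hj2,
          if_pos (show j ≤ k - 1 - 2 from by omega),
          smoothAt_d A i j hj1 (by omega), if_neg c1, if_pos c2,
          smoothAt_d (smoothAt A k) i j hj1 hj2, if_neg c1, if_pos c2,
          smoothAt_d A k (i - 1) (by omega) (by omega),
          if_pos (show i - 1 ≤ k - 2 from by omega)]
      · by_cases c3 : j = i
        · by_cases ck : k = i + 2
          · rw [smoothAt_d (smoothAt A i) (k - 1) j hj1 hj2,
              if_neg (show ¬ j ≤ k - 1 - 2 from by omega),
              if_pos (show j = k - 1 - 1 from by omega),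
              show k - 1 - 1 = i from by omega,
              smoothAt_d A i i (by omega) (by omega),
              if_neg (show ¬ i ≤ i - 2 from by omega),
              if_neg (show ¬ i = i - 1 from by omega), if_pos rfl,
              smoothAt_d (smoothAt A k) i j hj1 hj2, if_neg c1, if_neg c2,
              if_pos c3,
              smoothAt_d A k (i + 1) (by omega) (by omega),
              if_neg (show ¬ i + 1 ≤ k - 2 from by omega),
              if_pos (show i + 1 = k - 1 from by omega),
              show k - 1 = i + 1 from by omega]
          · rw [smoothAt_d (smoothAt A i) (k - 1) j hj1 hj2,
              if_pos (show j ≤ k - 1 - 2 from by omega),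
              smoothAt_d A i j hj1 (by omega), if_neg c1, if_neg c2, if_pos c3,
              smoothAt_d (smoothAt A k) i j hj1 hj2, if_neg c1, if_neg c2,
              if_pos c3,
              smoothAt_d A k (i + 1) (by omega) (by omega),
              if_pos (show i + 1 ≤ k - 2 from by omega)]
        · by_cases c4 : j ≤ k - 3
          · rw [smoothAt_d (smoothAt A i) (k - 1) j hj1 hj2,
              if_pos (show j ≤ k - 1 - 2 from by omega),
              smoothAt_d A i j hj1 (by omega), if_neg c1, if_neg c2, if_neg c3,
              smoothAt_d (smoothAt A k) i j hj1 hj2, if_neg c1, if_neg c2,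
              if_neg c3,
              smoothAt_d A k (j + 1) (by omega) (by omega),
              if_pos (show j + 1 ≤ k - 2 from by omega)]
          · by_cases c5 : j = k - 2
            · rw [smoothAt_d (smoothAt A i) (k - 1) j hj1 hj2,
                if_neg (show ¬ j ≤ k - 1 - 2 from by omega),
                if_pos (show j = k - 1 - 1 from by omega),
                show k - 1 - 1 = k - 2 from by omega,
                smoothAt_d A i (k - 2) (by omega) (by omega),
                if_neg (show ¬ k - 2 ≤ i - 2 from by omega),
                if_neg (show ¬ k - 2 = i - 1 from by omega),
                if_neg (show ¬ k - 2 = i from by omega),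
                show k - 2 + 1 = k - 1 from by omega,
                smoothAt_d (smoothAt A k) i j hj1 hj2, if_neg c1, if_neg c2,
                if_neg c3,
                show j + 1 = k - 1 from by omega,
                smoothAt_d A k (k - 1) (by omega) (by omega),
                if_neg (show ¬ k - 1 ≤ k - 2 from by omega), if_pos rfl]
            · by_cases c6 : j = k - 1
              · rw [smoothAt_d (smoothAt A i) (k - 1) j hj1 hj2,
                  if_neg (show ¬ j ≤ k - 1 - 2 from by omega),
                  if_neg (show ¬ j = k - 1 - 1 from by omega), if_pos c6,
                  show k - 1 + 1 = k from by omega,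
                  smoothAt_d A i k (by omega) (by omega),
                  if_neg (show ¬ k ≤ i - 2 from by omega),
                  if_neg (show ¬ k = i - 1 from by omega),
                  if_neg (show ¬ k = i from by omega),
                  smoothAt_d (smoothAt A k) i j hj1 hj2, if_neg c1, if_neg c2,
                  if_neg c3,
                  show j + 1 = k from by omega,
                  smoothAt_d A k k (by omega) (by omega),
                  if_neg (show ¬ k ≤ k - 2 from by omega),
                  if_neg (show ¬ k = k - 1 from by omega), if_pos rfl]
              · rw [smoothAt_d (smoothAt A i) (k - 1) j hj1 hj2,
                  if_neg (show ¬ j ≤ k - 1 - 2 from by omega),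
                  if_neg (show ¬ j = k - 1 - 1 from by omega), if_neg c6,
                  smoothAt_d A i (j + 1) (by omega) (by omega),
                  if_neg (show ¬ j + 1 ≤ i - 2 from by omega),
                  if_neg (show ¬ j + 1 = i - 1 from by omega),
                  if_neg (show ¬ j + 1 = i from by omega),
                  smoothAt_d (smoothAt A k) i j hj1 hj2, if_neg c1, if_neg c2,
                  if_neg c3,
                  smoothAt_d A k (j + 1) (by omega) (by omega),
                  if_neg (show ¬ j + 1 ≤ k - 2 from by omega),
                  if_neg (show ¬ j + 1 = k - 1 from by omega),
                  if_neg (show ¬ j + 1 = k from by omega)]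
  · intro j hj1 hj2
    by_cases c1 : j ≤ i - 1
    · rw [smoothAt_r (smoothAt A i) (k - 1) j hj1 hj2,
        if_pos (show j ≤ k - 1 - 1 from by omega),
        smoothAt_r A i j hj1 (by omega), if_pos c1,
        smoothAt_r (smoothAt A k) i j hj1 hj2, if_pos c1,
        smoothAt_r A k j hj1 (by omega), if_pos (show j ≤ k - 1 from by omega)]
    · by_cases c2 : j ≤ k - 2
      · rw [smoothAt_r (smoothAt A i) (k - 1) j hj1 hj2,
          if_pos (show j ≤ k - 1 - 1 from by omega),
          smoothAt_r A i j hj1 (by omega), if_neg c1,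
          smoothAt_r (smoothAt A k) i j hj1 hj2, if_neg c1,
          smoothAt_r A k (j + 1) (by omega) (by omega),
          if_pos (show j + 1 ≤ k - 1 from by omega)]
      · rw [smoothAt_r (smoothAt A i) (k - 1) j hj1 hj2,
          if_neg (show ¬ j ≤ k - 1 - 1 from by omega),
          smoothAt_r A i (j + 1) (by omega) (by omega),
          if_neg (show ¬ j + 1 ≤ i - 1 from by omega),
          smoothAt_r (smoothAt A k) i j hj1 hj2, if_neg c1,
          smoothAt_r A k (j + 1) (by omega) (by omega),
          if_neg (show ¬ j + 1 ≤ k - 1 from by omega)]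
  · intro j _ _; rfl
  · intro j _ _; rfl

lemma exists_smooth : ∀ p : ℕ, ∀ s : ℕ, 1 ≤ s → ∀ A : CTStruct p s, 1 ≤ p → A.IsArith →
    (∀ j, 1 ≤ j → j ≤ s → 2 ≤ A.dl j) →
    ∃ q : ℕ, ∃ C : CTStruct q s, 1 ≤ q ∧ q ≤ p ∧ C.IsArith ∧ C.IsSmooth ∧
      Relation.ReflTransGen SmoothStep ⟨p, s, A⟩ ⟨q, s, C⟩ := by
  intro p
  induction p using Nat.strong_induction_on with
  | _ p ih =>
    intro s hs A hp hA hdl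
    by_cases hsm : A.IsSmooth
    · exact ⟨p, A, hp, le_refl _, hA, hsm, Relation.ReflTransGen.refl⟩
    · have hex : ∃ i, 1 ≤ i ∧ i + 1 ≤ p ∧ A.d i = 1 := by
        by_contra hno
        push_neg at hno
        apply hsm
        refine ⟨fun i h1 h2 => ?_, hdl⟩
        have hpos := hA.1 i h1 (by omega)
        have hne := hno i h1 (by omega)
        omega
      obtain ⟨i, hi1, hip, hdi⟩ := hex
      have hA' : (smoothAt A i).IsArith := arith_smoothAt hs hA hi1 hip hdi
      have hstep : SmoothStep ⟨p, s, A⟩ ⟨p - 1, s, smoothAt A i⟩ :=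
        (step_iff hdl _).mpr ⟨i, hi1, hip, hdi, rfl⟩
      have hdl' : ∀ j, 1 ≤ j → j ≤ s → 2 ≤ (smoothAt A i).dl j := hdl
      obtain ⟨q, C, hq1, hq2, hCa, hCs, hR⟩ :=
        ih (p - 1) (by omega) s hs (smoothAt A i) (by omega) hA' hdl'
      exact ⟨q, C, hq1, by omega, hCa, hCs, Relation.ReflTransGen.head hstep hR⟩

/-- The invariant along smoothing sequences. -/
def CTInv (X : CTS) : Prop :=
  1 ≤ X.2.1 ∧ X.2.2.IsArith ∧ (∀ j, 1 ≤ j → j ≤ X.2.1 → 2 ≤ X.2.2.dl j)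

lemma inv_step {X Y : CTS} (hX : CTInv X) (h : SmoothStep X Y) :
    CTInv Y ∧ Y.1 + 1 = X.1 := by
  obtain ⟨p, s, A⟩ := X
  obtain ⟨hs, hA, hdl⟩ := hX
  have hs' : (1:ℕ) ≤ s := hs
  have hA' : A.IsArith := hA
  have hdl' : ∀ j, 1 ≤ j → j ≤ s → 2 ≤ A.dl j := hdl
  rw [step_iff hdl'] at h
  obtain ⟨i, hi1, hip, hdi, rfl⟩ := h
  refine ⟨⟨hs', arith_smoothAt hs' hA' hi1 hip hdi, hdl'⟩, ?_⟩
  show p - 1 + 1 = p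
  omega

lemma diamond {X Y Z : CTS} (hX : CTInv X) (hY : SmoothStep X Y) (hZ : SmoothStep X Z) :
    Y = Z ∨ ∃ W : CTS, SmoothStep Y W ∧ SmoothStep Z W := by
  obtain ⟨p, s, A⟩ := X
  obtain ⟨hs, hA, hdl⟩ := hX
  have hs' : (1:ℕ) ≤ s := hs
  have hA' : A.IsArith := hA
  have hdl' : ∀ j, 1 ≤ j → j ≤ s → 2 ≤ A.dl j := hdl
  rw [step_iff hdl'] at hY hZ
  obtain ⟨i, hi1, hip, hdi, rfl⟩ := hY
  obtain ⟨k, hk1, hkp, hdk, rfl⟩ := hZ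
  have hdli : ∀ j, 1 ≤ j → j ≤ s → 2 ≤ (smoothAt A i).dl j := hdl'
  have hdlk : ∀ j, 1 ≤ j → j ≤ s → 2 ≤ (smoothAt A k).dl j := hdl'
  rcases Nat.lt_trichotomy i k with hik | hik | hik
  · right
    have hgap : i + 2 ≤ k := by
      rcases Nat.lt_or_ge (i + 1) k with h | h
      · omega
      · exfalso
        have hk' : k = i + 1 := by omega
        rw [hk'] at hdk
        exact no_adj hs' hA' hi1 hip hdi hdk
    refine ⟨⟨p - 1 - 1, s, smoothAt (smoothAt A i) (k - 1)⟩, ?_, ?_⟩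
    · refine (step_iff hdli _).mpr ⟨k - 1, by omega, by omega, ?_, rfl⟩
      rw [smoothAt_d A i (k - 1) (by omega) (by omega),
        if_neg (show ¬ k - 1 ≤ i - 2 from by omega),
        if_neg (show ¬ k - 1 = i - 1 from by omega),
        if_neg (show ¬ k - 1 = i from by omega),
        show k - 1 + 1 = k from by omega]
      exact hdk
    · refine (step_iff hdlk _).mpr ⟨i, hi1, by omega, ?_, ?_⟩
      · rw [smoothAt_d A k i hi1 (by omega), if_pos (show i ≤ k - 2 from by omega)]
        exact hdi
      · exact congrArg (fun Z => (⟨p - 1 - 1, s, Z⟩ : CTS))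
          (smooth_comm A hi1 hgap hkp)
  · left
    subst hik
    rfl
  · right
    have hgap : k + 2 ≤ i := by
      rcases Nat.lt_or_ge (k + 1) i with h | h
      · omega
      · exfalso
        have hi' : i = k + 1 := by omega
        rw [hi'] at hdi
        exact no_adj hs' hA' hk1 hkp hdk hdi
    refine ⟨⟨p - 1 - 1, s, smoothAt (smoothAt A k) (i - 1)⟩, ?_, ?_⟩
    · refine (step_iff hdli _).mpr ⟨k, hk1, by omega, ?_, ?_⟩
      · rw [smoothAt_d A i k hk1 (by omega), if_pos (show k ≤ i - 2 from by omega)]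
        exact hdk
      · exact congrArg (fun Z => (⟨p - 1 - 1, s, Z⟩ : CTS))
          (smooth_comm A hk1 hgap hip)
    · refine (step_iff hdlk _).mpr ⟨i - 1, by omega, by omega, ?_, rfl⟩
      rw [smoothAt_d A k (i - 1) (by omega) (by omega),
        if_neg (show ¬ i - 1 ≤ k - 2 from by omega),
        if_neg (show ¬ i - 1 = k - 1 from by omega),
        if_neg (show ¬ i - 1 = k from by omega),
        show i - 1 + 1 = i from by omega]
      exact hdi

lemma inv_step' {X Y : CTS} (hX : CTInv X) (h : SmoothStep X Y) : 1 ≤ Y.1 := by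
  obtain ⟨p, s, A⟩ := X
  obtain ⟨hs, hA, hdl⟩ := hX
  have hdl' : ∀ j, 1 ≤ j → j ≤ s → 2 ≤ A.dl j := hdl
  rw [step_iff hdl'] at h
  obtain ⟨i, hi1, hip, hdi, rfl⟩ := h
  show 1 ≤ p - 1
  omega

lemma unique_nf : ∀ n : ℕ, ∀ B : CTS, B.1 ≤ n → CTInv B →
    ∀ X X' : CTS, Relation.ReflTransGen SmoothStep B X →
    Relation.ReflTransGen SmoothStep B X' →
    (∀ Y, ¬ SmoothStep X Y) → (∀ Y, ¬ SmoothStep X' Y) → X = X' := by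
  intro n
  induction n with
  | zero =>
    intro B hBn hInv X X' hX hX' nX nX'
    rcases Relation.ReflTransGen.cases_head hX with rfl | ⟨Y, hBY, hYX⟩
    · rcases Relation.ReflTransGen.cases_head hX' with rfl | ⟨Z, hBZ, hZX'⟩
      · rfl
      · exact absurd hBZ (nX _)
    · have := (inv_step hInv hBY).2
      omega
  | succ n ih =>
    intro B hBn hInv X X' hX hX' nX nX'
    rcases Relation.ReflTransGen.cases_head hX with rfl | ⟨Y, hBY, hYX⟩
    · rcases Relation.ReflTransGen.cases_head hX' with rfl | ⟨Z, hBZ, hZX'⟩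
      · rfl
      · exact absurd hBZ (nX _)
    · rcases Relation.ReflTransGen.cases_head hX' with rfl | ⟨Z, hBZ, hZX'⟩
      · exact absurd hBY (nX' _)
      · obtain ⟨hInvY, hYp⟩ := inv_step hInv hBY
        obtain ⟨hInvZ, hZp⟩ := inv_step hInv hBZ
        rcases diamond hInv hBY hBZ with rfl | ⟨W, hYW, hZW⟩
        · exact ih Y (by omega) hInvY X X' hYX hZX' nX nX'
        · have hW1 : 1 ≤ W.1 := inv_step' hInvY hYW
          obtain ⟨hInvW, hWp⟩ := inv_step hInvY hYW
          obtain ⟨pW, sW, CW⟩ := W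
          obtain ⟨q, C, hq1, hq2, hCa, hCs, hR⟩ :=
            exists_smooth pW sW hInvW.1 CW hW1 hInvW.2.1 hInvW.2.2
          have nN : ∀ V, ¬ SmoothStep ⟨q, sW, C⟩ V := normal_of_smooth hCs hCs.2
          have h1 : X = ⟨q, sW, C⟩ :=
            ih Y (by omega) hInvY X _ hYX (Relation.ReflTransGen.head hYW hR) nX nN
          have h2 : X' = ⟨q, sW, C⟩ :=
            ih Z (by omega) hInvZ X' _ hZX' (Relation.ReflTransGen.head hZW hR) nX' nN
          rw [h1, h2]

/-- Every arithmetical structure on `CT(p,s)` with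
`d_{ℓ_1}, …, d_{ℓ_s} ≥ 2` has a unique smooth arithmetical structure on `CT(q,s)`
as an ancestor, for some `1 ≤ q ≤ p`.  (An ancestor is anything obtained by a
finite sequence of smoothing operations.) -/
theorem ct_unique_smooth_ancestor (p s : ℕ) (hp : 1 ≤ p) (hs : 1 ≤ s)
    (B : CTStruct p s) (hB : B.IsArith)
    (hdl : ∀ j, 1 ≤ j → j ≤ s → 2 ≤ B.dl j) :
    ∃! X : CTS, 1 ≤ X.1 ∧ X.1 ≤ p ∧ X.2.1 = s ∧
      X.2.2.IsArith ∧ X.2.2.IsSmooth ∧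
      Relation.ReflTransGen SmoothStep ⟨p, s, B⟩ X := by
  obtain ⟨q, C, hq1, hq2, hCa, hCs, hR⟩ := exists_smooth p s hs B hp hB hdl
  refine ⟨⟨q, s, C⟩, ⟨hq1, hq2, rfl, hCa, hCs, hR⟩, ?_⟩
  rintro ⟨q', s', C'⟩ ⟨h1, h2, h3, h4, h5, h6⟩
  exact unique_nf p ⟨p, s, B⟩ (le_refl p) ⟨hs, hB, hdl⟩ ⟨q', s', C'⟩ ⟨q, s, C⟩ h6 hR
    (normal_of_smooth h5 h5.2) (normal_of_smooth hCs hCs.2)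
end

section
/- If s ≥ 2, then the number of arithmetical structures on the star graph CT(1,s) (the star with s+1 vertices) is |Arith(CT(1,s))| = 1 + Σ_{j=0}^{s−2} binom(s, j)·|SArith(CT(1, s−j))|. -/
/-- The number of smooth arithmetical structures on `CT(p,s)`. -/
noncomputable def sArithCard (p s : ℕ) : ℕ :=
  Nat.card {A : CTStruct p s // A.IsArith ∧ A.IsSmooth}


/-!
An arithmetical structure on the star `CT(1,s)` is determined by its leaf labels `d_ℓ`: the
centre carries `r = lcm d_ℓ` and `d = ∑ 1 / d_ℓ`, and each leaf carries `r_ℓ = r / d_ℓ`.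
Hence `Arith(CT(1,s))` is in bijection with the `s`-tuples of positive integers whose
reciprocals sum to an integer, the smooth structures being the tuples with all entries `≥ 2`.
Classifying a tuple by the set of its entries equal to `1` and deleting those entries leaves a
smooth tuple on the remaining `s - j` leaves. With no remaining leaf there is exactly one
(empty) tuple, and with one remaining leaf there is none, since then `0 < 1 / d_ℓ < 1`.
-/

open Finset

section UnitFractions

variable {ι κ : Type*} [Fintype ι] [Fintype κ]

def RecipSumIsNat (f : ι → ℕ) : Prop := ∃ n : ℕ, ∑ i, ((f i : ℚ))⁻¹ = n

abbrev PosRecip (ι : Type*) [Fintype ι] : Type _ :=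
  {f : ι → ℕ // (∀ i, 0 < f i) ∧ RecipSumIsNat f}

lemma exists_le_of_sum_inv_eq [Nonempty ι] {f : ι → ℕ} {q : ℚ} (hq : 0 < q)
    (hpos : ∀ i, 0 < f i) (hf : ∑ i, ((f i : ℚ))⁻¹ = q) :
    ∃ i, (f i : ℚ) ≤ Fintype.card ι / q := by
  have hcard : (0 : ℚ) < Fintype.card ι := by exact_mod_cast Fintype.card_pos
  have hsum : ∑ _i : ι, q / Fintype.card ι ≤ ∑ i, ((f i : ℚ))⁻¹ := by
    rw [hf, sum_const, card_univ, nsmul_eq_mul, mul_div_cancel₀ _ hcard.ne']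
  obtain ⟨i, -, hi⟩ := exists_le_of_sum_le univ_nonempty hsum
  have hfi : (0 : ℚ) < f i := by exact_mod_cast hpos i
  refine ⟨i, (le_div_iff₀ hq).2 ?_⟩
  calc (f i : ℚ) * q = f i * (q / Fintype.card ι) * Fintype.card ι := by field_simp
    _ ≤ f i * (f i : ℚ)⁻¹ * Fintype.card ι := by gcongr
    _ = Fintype.card ι := by field_simp

theorem finite_setOf_sum_inv_eq (k : ℕ) (q : ℚ) :
    {f : Fin k → ℕ | (∀ i, 0 < f i) ∧ ∑ i, ((f i : ℚ))⁻¹ = q}.Finite := by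
  induction k generalizing q with
  | zero => exact Set.toFinite _
  | succ k ih =>
    rcases le_or_gt q 0 with hq | hq
    · refine Set.Finite.subset Set.finite_empty fun f ⟨hpos, hf⟩ => ?_
      have : 0 < ∑ i, ((f i : ℚ))⁻¹ :=
        sum_pos (fun i _ => by have := hpos i; positivity) univ_nonempty
      linarith
    · -- some entry `f i` is at most `(k + 1) / q`; deleting it leaves a `k`-tuple summing to
      -- `q - 1 / f i`
      set N := ⌈(Fintype.card (Fin (k + 1)) : ℚ) / q⌉₊
      refine Set.Finite.subset (Set.finite_iUnion fun i : Fin (k + 1) =>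
          (finite_toSet (Icc 1 N)).biUnion fun n _ =>
            (ih (q - (n : ℚ)⁻¹)).image (i.insertNth (α := fun _ => ℕ) n))
        fun f ⟨hpos, hf⟩ => ?_
      obtain ⟨i, hi⟩ := exists_le_of_sum_inv_eq hq hpos hf
      refine Set.mem_iUnion.2 ⟨i, Set.mem_iUnion₂.2
        ⟨f i, ?_, i.removeNth f, ⟨fun j => hpos _, ?_⟩, ?_⟩⟩
      · exact mem_Icc.2 ⟨hpos i, Nat.cast_le.1 (hi.trans (Nat.le_ceil _))⟩
      · rw [← hf, Fin.sum_univ_succAbove _ i]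
        simp [Fin.removeNth]
      · simp [Fin.insertNth_removeNth]

lemma sum_inv_le_card (f : ι → ℕ) : ∑ i, ((f i : ℚ))⁻¹ ≤ Fintype.card ι := by
  simpa using sum_le_sum fun i (_ : i ∈ univ) => Nat.cast_inv_le_one (α := ℚ) (f i)

lemma recipSumIsNat_comp_equiv (e : κ ≃ ι) {f : ι → ℕ} :
    RecipSumIsNat (f ∘ e) ↔ RecipSumIsNat f := by
  simp only [RecipSumIsNat, Function.comp_apply, e.sum_comp (fun i => ((f i : ℚ))⁻¹)]

instance PosRecip.finite : Finite (PosRecip ι) := by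
  set e := Fintype.equivFin ι
  have hfin :
      {g : Fin (Fintype.card ι) → ℕ | (∀ i, 0 < g i) ∧ RecipSumIsNat g}.Finite := by
    refine ((range (Fintype.card ι + 1)).finite_toSet.biUnion fun n _ =>
      finite_setOf_sum_inv_eq _ (n : ℚ)).subset fun g ⟨hpos, n, hn⟩ => ?_
    have : (n : ℚ) ≤ Fintype.card (Fin (Fintype.card ι)) := hn ▸ sum_inv_le_card g
    simp only [Fintype.card_fin, Nat.cast_le] at this
    exact Set.mem_biUnion (mem_range.2 (by omega)) ⟨hpos, hn⟩
  have := hfin.to_subtype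
  refine Finite.of_injective
    (fun f => (⟨f.1 ∘ e.symm, fun i => f.2.1 _, (recipSumIsNat_comp_equiv e.symm).2 f.2.2⟩ :
      {g | (∀ i, 0 < g i) ∧ RecipSumIsNat g}))
    fun f g h => ?_
  ext i
  simpa using congrFun (congrArg Subtype.val h) (e i)

abbrev SmoothRecip (ι : Type*) [Fintype ι] : Type _ :=
  {f : ι → ℕ // (∀ i, 2 ≤ f i) ∧ RecipSumIsNat f}

def SmoothRecip.congr (e : κ ≃ ι) : SmoothRecip κ ≃ SmoothRecip ι :=
  (e.arrowCongr (Equiv.refl ℕ)).subtypeEquiv fun f => by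
    refine and_congr ⟨fun h i => by simpa using h (e.symm i), fun h i => by simpa using h (e i)⟩
      (recipSumIsNat_comp_equiv e.symm).symm

noncomputable def smoothRecipCount (k : ℕ) : ℕ := Nat.card (SmoothRecip (Fin k))

lemma card_smoothRecip (ι : Type*) [Fintype ι] :
    Nat.card (SmoothRecip ι) = smoothRecipCount (Fintype.card ι) :=
  Nat.card_congr (SmoothRecip.congr (Fintype.equivFin ι).symm |>.symm)

lemma smoothRecipCount_zero : smoothRecipCount 0 = 1 :=
  Nat.card_eq_one_iff_unique.2 ⟨⟨fun f g => Subtype.ext (Subsingleton.elim _ _)⟩,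
    ⟨⟨finZeroElim, finZeroElim, 0, by simp⟩⟩⟩

lemma smoothRecipCount_one : smoothRecipCount 1 = 0 := by
  refine Nat.card_eq_zero.2 (Or.inl ⟨fun ⟨f, hf, n, hn⟩ => ?_⟩)
  have h2 : (2 : ℚ) ≤ f 0 := by exact_mod_cast hf 0
  simp only [Finset.univ_unique, Fin.default_eq_zero, sum_singleton] at hn
  have hlt : (f 0 : ℚ)⁻¹ < 1 := inv_lt_one_of_one_lt₀ (by linarith)
  have hpos : (0 : ℚ) < (f 0 : ℚ)⁻¹ := by positivity
  rw [hn] at hlt hpos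
  norm_cast at hlt hpos
  omega

def unitLeaves (f : ι → ℕ) : Finset ι := univ.filter (f · = 1)

lemma eq_one_iff_of_unitLeaves_eq {f : ι → ℕ} {T : Finset ι} (h : unitLeaves f = T) (i : ι) :
    f i = 1 ↔ i ∈ T := by
  simp [← h, unitLeaves]

section Fibers

variable [DecidableEq ι]

lemma sum_inv_eq_card_add_sum_compl (T : Finset ι) {f : ι → ℕ} (hf : ∀ i ∈ T, f i = 1) :
    ∑ i, ((f i : ℚ))⁻¹ = #T + ∑ i : {i // i ∉ T}, ((f i : ℚ))⁻¹ := by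
  rw [← Fintype.sum_subtype_add_sum_subtype (· ∈ T)]
  congr 1
  simp [fun i : {i // i ∈ T} => hf i i.2]

lemma recipSumIsNat_iff_compl (T : Finset ι) {f : ι → ℕ} (hf : ∀ i ∈ T, f i = 1) :
    RecipSumIsNat f ↔ RecipSumIsNat fun i : {i // i ∉ T} => f i := by
  have hsplit := sum_inv_eq_card_add_sum_compl T hf
  have hnonneg : 0 ≤ ∑ i : {i // i ∉ T}, ((f i : ℚ))⁻¹ := by positivity
  constructor
  · rintro ⟨n, hn⟩
    have hle : #T ≤ n := by exact_mod_cast (hn ▸ hsplit ▸ le_add_of_nonneg_right hnonneg)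
    exact ⟨n - #T, by push_cast [hle]; linarith⟩
  · rintro ⟨n, hn⟩
    exact ⟨#T + n, by push_cast; linarith⟩

def unitLeavesFiberEquiv (T : Finset ι) :
    {f : PosRecip ι // unitLeaves f.1 = T} ≃ SmoothRecip {i // i ∉ T} where
  toFun f := ⟨fun i => f.1.1 i, fun i => by
      have h1 : f.1.1 i ≠ 1 := mt (eq_one_iff_of_unitLeaves_eq f.2 i).1 i.2
      have := f.1.2.1 i
      show 2 ≤ f.1.1 i
      omega,
    (recipSumIsNat_iff_compl T fun i => (eq_one_iff_of_unitLeaves_eq f.2 i).2).1 f.1.2.2⟩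
  invFun g := ⟨⟨fun i => if h : i ∈ T then 1 else g.1 ⟨i, h⟩, fun i => by
      by_cases hi : i ∈ T
      · simp [hi]
      · simpa [hi] using zero_lt_two.trans_le (g.2.1 ⟨i, hi⟩),
    (recipSumIsNat_iff_compl T fun i hi => dif_pos hi).2
      (by convert g.2.2 using 2 with i; exact dif_neg i.2)⟩, by
      ext i
      by_cases hi : i ∈ T
      · simp [unitLeaves, hi]
      · have := g.2.1 ⟨i, hi⟩
        simp only [unitLeaves, mem_filter, mem_univ, true_and, hi, dif_neg, not_false_eq_true,
          iff_false]
        omega⟩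
  left_inv f := by
    ext i
    by_cases hi : i ∈ T
    · simpa [hi] using ((eq_one_iff_of_unitLeaves_eq f.2 i).2 hi).symm
    · simp [hi]
  right_inv g := by
    ext i
    simp [i.2]

theorem card_posRecip (ι : Type*) [Fintype ι] [DecidableEq ι] :
    Nat.card (PosRecip ι) =
      ∑ j ∈ range (Fintype.card ι + 1),
        (Fintype.card ι).choose j * smoothRecipCount (Fintype.card ι - j) := by
  calc _ = ∑ T : Finset ι, Nat.card {f : PosRecip ι // unitLeaves f.1 = T} := by
        rw [← Nat.card_sigma, Nat.card_congr (Equiv.sigmaFiberEquiv _)]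
    _ = ∑ T : Finset ι, smoothRecipCount (Fintype.card ι - #T) := by
        refine sum_congr rfl fun T _ => ?_
        rw [Nat.card_congr (unitLeavesFiberEquiv T), card_smoothRecip,
          Fintype.card_subtype_compl, Fintype.card_coe]
    _ = _ := by
        rw [← powerset_univ,
          sum_powerset_apply_card (fun j => smoothRecipCount (Fintype.card ι - j)), card_univ]
        simp only [smul_eq_mul]

end Fibers

end UnitFractions

section LcmGcd

variable {ι : Type*} {t : Finset ι} {dl rl : ι → ℕ}

lemma eq_lcm_of_mul_eq_of_coprime {r : ℕ} (hdl : ∀ i ∈ t, 0 < dl i)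
    (h : ∀ i ∈ t, dl i * rl i = r) (hgcd : Nat.Coprime r (t.gcd rl)) : r = t.lcm dl := by
  obtain ⟨c, hc⟩ : t.lcm dl ∣ r := lcm_dvd fun i hi => ⟨rl i, (h i hi).symm⟩
  have hc_dvd : ∀ i ∈ t, c ∣ rl i := fun i hi => by
    obtain ⟨m, hm⟩ := dvd_lcm (f := dl) hi
    refine ⟨m, Nat.eq_of_mul_eq_mul_left (hdl i hi) ?_⟩
    rw [h i hi, hc, hm]
    ring
  have hc1 : c = 1 := Nat.eq_one_of_dvd_one <|
    hgcd ▸ Nat.dvd_gcd ⟨t.lcm dl, by rw [hc, mul_comm]⟩ (dvd_gcd hc_dvd)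
  rw [hc, hc1, mul_one]

lemma coprime_lcm_gcd_of_mul_eq_lcm (hdl : ∀ i ∈ t, 0 < dl i)
    (h : ∀ i ∈ t, dl i * rl i = t.lcm dl) : Nat.Coprime (t.lcm dl) (t.gcd rl) := by
  set L := t.lcm dl
  set g := Nat.gcd L (t.gcd rl)
  have hL : 0 < L := Nat.pos_of_ne_zero fun h0 => by
    obtain ⟨i, hi, h0⟩ := lcm_eq_zero_iff.1 h0
    exact (hdl i hi).ne' h0
  have hgL : g ∣ L := Nat.gcd_dvd_left _ _
  have hdiv : L ∣ L / g := lcm_dvd fun i hi => Nat.dvd_div_of_mul_dvd <| by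
    rw [mul_comm, ← h i hi]
    exact mul_dvd_mul_left _ ((Nat.gcd_dvd_right _ _).trans (gcd_dvd hi))
  have : g * L ∣ 1 * L := by simpa using Nat.mul_dvd_of_dvd_div hgL hdiv
  exact Nat.eq_one_of_dvd_one (Nat.dvd_of_mul_dvd_mul_right hL this)

end LcmGcd

section Star

variable {s : ℕ}

lemma isArith_star_iff (A : CTStruct 1 s) :
    A.IsArith ↔ 0 < A.d 1 ∧ 0 < A.r 1 ∧ (∀ j ∈ Icc 1 s, 0 < A.dl j) ∧
      (∀ j ∈ Icc 1 s, 0 < A.rl j) ∧ A.d 1 * A.r 1 = ∑ j ∈ Icc 1 s, A.rl j ∧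
      (∀ j ∈ Icc 1 s, A.dl j * A.rl j = A.r 1) ∧
      Nat.Coprime (A.r 1) ((Icc 1 s).gcd A.rl) := by
  have hpath : ∀ P : ℕ → Prop, (∀ i, 1 ≤ i → i ≤ 1 → P i) ↔ P 1 :=
    fun P => ⟨fun h => h 1 le_rfl le_rfl, fun h i h1 h2 => le_antisymm h2 h1 ▸ h⟩
  simp only [CTStruct.IsArith, IsCTArith, hpath, Icc_self, gcd_singleton, normalize_eq, mem_Icc,
    Nat.Coprime]
  simp

lemma CTStruct.eq_of_star {A B : CTStruct 1 s} (hd : A.d 1 = B.d 1) (hr : A.r 1 = B.r 1)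
    (hdl : ∀ j ∈ Icc 1 s, A.dl j = B.dl j) (hrl : ∀ j ∈ Icc 1 s, A.rl j = B.rl j) :
    A = B := by
  have ext_Icc : ∀ {n : ℕ} {f g : ℕ → ℕ}, (∀ i, ¬(1 ≤ i ∧ i ≤ n) → f i = 0) →
      (∀ i, ¬(1 ≤ i ∧ i ≤ n) → g i = 0) → (∀ i ∈ Icc 1 n, f i = g i) → f = g :=
    fun {n} {f g} hf hg h => funext fun i => if hi : 1 ≤ i ∧ i ≤ n then h i (mem_Icc.2 hi)
      else (hf i hi).trans (hg i hi).symm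
  rcases A with ⟨dA, rA, dlA, rlA, hdA, hrA, hdlA, hrlA⟩
  rcases B with ⟨dB, rB, dlB, rlB, hdB, hrB, hdlB, hrlB⟩
  congr
  · exact ext_Icc hdA hdB (by simpa using hd)
  · exact ext_Icc hrA hrB (by simpa using hr)
  · exact ext_Icc hdlA hdlB hdl
  · exact ext_Icc hrlA hrlB hrl

def leafLabels (A : CTStruct 1 s) : Icc 1 s → ℕ := fun j => A.dl j

lemma sum_inv_leafLabels {A : CTStruct 1 s} (hA : A.IsArith) :
    ∑ j, ((leafLabels A j : ℚ))⁻¹ = A.d 1 := by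
  obtain ⟨-, hr, hdl, -, hsum, hmul, -⟩ := (isArith_star_iff A).1 hA
  have hinv : ∀ j ∈ Icc 1 s, ((A.dl j : ℚ))⁻¹ = A.rl j / A.r 1 := fun j hj => by
    have := hdl j hj
    rw [eq_div_iff (by positivity), ← hmul j hj]
    push_cast
    field_simp
  change ∑ j : Icc 1 s, ((A.dl j : ℚ))⁻¹ = _
  rw [sum_coe_sort (Icc 1 s) fun j => ((A.dl j : ℚ))⁻¹, sum_congr rfl hinv,
    ← sum_div, div_eq_iff (by positivity)]
  exact_mod_cast hsum.symm

lemma eq_of_leafLabels_eq {A B : CTStruct 1 s} (hA : A.IsArith) (hB : B.IsArith)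
    (h : leafLabels A = leafLabels B) : A = B := by
  have hdl : ∀ j ∈ Icc 1 s, A.dl j = B.dl j := fun j hj => congrFun h ⟨j, hj⟩
  obtain ⟨-, hrA, hdlA, -, hsumA, hmulA, hgcdA⟩ := (isArith_star_iff A).1 hA
  obtain ⟨-, -, -, -, hsumB, hmulB, hgcdB⟩ := (isArith_star_iff B).1 hB
  have hr : A.r 1 = B.r 1 := by
    rw [eq_lcm_of_mul_eq_of_coprime hdlA hmulA hgcdA, eq_lcm_of_mul_eq_of_coprime
      (fun j hj => hdl j hj ▸ hdlA j hj) hmulB hgcdB, lcm_congr rfl hdl]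
  have hrl : ∀ j ∈ Icc 1 s, A.rl j = B.rl j := fun j hj =>
    Nat.eq_of_mul_eq_mul_left (hdlA j hj) (by rw [hmulA j hj, hdl j hj, hmulB j hj, hr])
  refine CTStruct.eq_of_star (Nat.eq_of_mul_eq_mul_right hrA ?_) hr hdl hrl
  rw [hsumA, hr, hsumB, sum_congr rfl hrl]

lemma exists_isArith_leafLabels_eq (hs : 1 ≤ s) {f : Icc 1 s → ℕ} (hpos : ∀ j, 0 < f j)
    (hf : RecipSumIsNat f) : ∃ A : CTStruct 1 s, A.IsArith ∧ leafLabels A = f := by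
  obtain ⟨n, hn⟩ := hf
  set D : ℕ → ℕ := fun j => if h : j ∈ Icc 1 s then f ⟨j, h⟩ else 0
  have hD : ∀ j (h : j ∈ Icc 1 s), D j = f ⟨j, h⟩ := fun j h => dif_pos h
  have hDpos : ∀ j ∈ Icc 1 s, 0 < D j := fun j h => (hD j h).symm ▸ hpos _
  set L := (Icc 1 s).lcm D
  have hmul : ∀ j ∈ Icc 1 s, D j * (L / D j) = L := fun j h => Nat.mul_div_cancel' (dvd_lcm h)
  have hL : 0 < L := Nat.pos_of_ne_zero fun h0 => by
    obtain ⟨j, hj, h0⟩ := lcm_eq_zero_iff.1 h0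
    exact (hDpos j hj).ne' h0
  have hn_pos : 0 < n := by
    have : Nonempty (Icc 1 s) := ⟨⟨1, mem_Icc.2 ⟨le_rfl, hs⟩⟩⟩
    have : (0 : ℚ) < n := hn ▸ sum_pos (fun j _ => by have := hpos j; positivity) univ_nonempty
    exact_mod_cast this
  have hsum : n * L = ∑ j ∈ Icc 1 s, L / D j := by
    have hinv : ∑ j ∈ Icc 1 s, ((D j : ℚ))⁻¹ = n := by
      rw [← sum_coe_sort, ← hn]
      exact sum_congr rfl fun j _ => by rw [hD j j.2]
    have hdiv : ∀ j ∈ Icc 1 s, ((L / D j : ℕ) : ℚ) = L * (D j : ℚ)⁻¹ := fun j h => by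
      rw [Nat.cast_div (dvd_lcm h) (by have := hDpos j h; positivity), div_eq_mul_inv]
    apply Nat.cast_injective (R := ℚ)
    rw [Nat.cast_sum, sum_congr rfl hdiv, ← mul_sum, hinv]
    push_cast
    ring
  refine ⟨{ d := fun i => if i = 1 then n else 0
            r := fun i => if i = 1 then L else 0
            dl := D
            rl := fun j => L / D j
            d_norm := fun i hi => if_neg (by omega)
            r_norm := fun i hi => if_neg (by omega)
            dl_norm := fun j hj => dif_neg (by simpa using hj)
            rl_norm := fun j hj => by
              rw [show D j = 0 from dif_neg (by simpa using hj), Nat.div_zero] },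
    ?_, funext fun j => hD j j.2⟩
  rw [isArith_star_iff]
  simp only [if_true]
  exact ⟨hn_pos, hL, hDpos, fun j h => Nat.div_pos (Nat.le_of_dvd hL (dvd_lcm h)) (hDpos j h),
    hsum, hmul, coprime_lcm_gcd_of_mul_eq_lcm hDpos hmul⟩

noncomputable def starArithEquiv (hs : 1 ≤ s) :
    {A : CTStruct 1 s // A.IsArith} ≃ PosRecip (Icc 1 s) :=
  Equiv.ofBijective
    (fun A => ⟨leafLabels A.1, fun j => ((isArith_star_iff _).1 A.2).2.2.1 j j.2,
      A.1.d 1, sum_inv_leafLabels A.2⟩)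
    ⟨fun A B h => Subtype.ext (eq_of_leafLabels_eq A.2 B.2 (congrArg Subtype.val h)),
      fun f => let ⟨A, hA, hAf⟩ := exists_isArith_leafLabels_eq hs f.2.1 f.2.2
        ⟨⟨A, hA⟩, Subtype.ext hAf⟩⟩

lemma isSmooth_star_iff (A : CTStruct 1 s) : A.IsSmooth ↔ ∀ j, 2 ≤ leafLabels A j := by
  simp only [CTStruct.IsSmooth, IsCTSmooth, leafLabels, Subtype.forall, mem_Icc]
  exact ⟨fun h j hj => h.2 j hj.1 hj.2,
    fun h => ⟨fun i h1 h0 => by omega, fun j h1 h2 => h j ⟨h1, h2⟩⟩⟩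

lemma sArithCard_one_eq_smoothRecipCount (hs : 1 ≤ s) :
    sArithCard 1 s = smoothRecipCount s := by
  have e : {A : CTStruct 1 s // A.IsArith ∧ A.IsSmooth} ≃ SmoothRecip (Icc 1 s) :=
    (Equiv.subtypeSubtypeEquivSubtypeInter _ _).symm.trans <|
      ((starArithEquiv hs).subtypeEquiv fun A => isSmooth_star_iff A.1).trans <|
        (Equiv.subtypeSubtypeEquivSubtypeInter _ _).trans <|
          Equiv.subtypeEquivRight fun f =>
            ⟨fun ⟨⟨_, hf⟩, h2⟩ => ⟨h2, hf⟩,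
              fun ⟨h2, hf⟩ => ⟨⟨fun j => by linarith [h2 j], hf⟩, h2⟩⟩
  rw [sArithCard, Nat.card_congr e, card_smoothRecip]
  simp

end Star

/-- star graphs.  For `s ≥ 2`, the number of arithmetical
structures on the star graph `CT(1,s)` is
`1 + Σ_{j=0}^{s-2} choose s j * |SArith(CT(1, s-j))|`. -/
theorem ct_count_arith_star (s : ℕ) (hs : 2 ≤ s) :
    Nat.card {A : CTStruct 1 s // A.IsArith} =
      1 + ∑ j ∈ Finset.range (s - 1), Nat.choose s j * sArithCard 1 (s - j) := by
  obtain ⟨m, rfl⟩ : ∃ m, s = m + 2 := ⟨s - 2, by omega⟩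
  have hcard : Fintype.card (Icc 1 (m + 2)) = m + 2 := by simp
  rw [Nat.card_congr (starArithEquiv (by omega)), card_posRecip, hcard, sum_range_succ,
    sum_range_succ, Nat.sub_self, show m + 2 - (m + 1) = 1 by omega,
    show m + 2 - 1 = m + 1 by omega, smoothRecipCount_zero, smoothRecipCount_one,
    Nat.choose_self, mul_zero, add_zero, mul_one, add_comm]
  congr 1
  refine sum_congr rfl fun j hj => ?_
  rw [sArithCard_one_eq_smoothRecipCount (by simp at hj; omega)]
end

section
/- Let x, y be positive integers such that x divides y. Then the Euclidean chain function satisfies F(x, y) = 1 + y/x. -/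
/-! Starting from `(x, k x)`, the chain is `x, k x, (k-1) x, …, x, 0`: modulo `m x` we have
`-(m+1) x ≡ (m-1) x`, so each step lowers the multiplier by one, and once a term vanishes
all later ones do. Hence the positive terms are `x` followed by the `k` multiples `k x, …, x`. -/

/-- One step of the Euclidean chain: the least nonnegative residue of `-a` modulo
`b` when `b ∉ {0, 1}`, and `0` otherwise. -/
def chainNext (a b : ℕ) : ℕ := if b = 0 ∨ b = 1 then 0 else (b - a % b) % b

/-- The Euclidean chain with initial terms `x_1 = x₁` and `x_2 = x₂`, defined by
`x_{i+1} = (-x_{i-1}) mod x_i` if `x_i ∉ {0,1}` and `x_{i+1} = 0` otherwise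
(the value at index `0` is junk). -/
def chain (x₁ x₂ : ℕ) : ℕ → ℕ
  | 0 => 0
  | 1 => x₁
  | 2 => x₂
  | n + 3 => chainNext (chain x₁ x₂ (n + 1)) (chain x₁ x₂ (n + 2))

/-- The Euclidean chain function `F(x₁, x₂)`: the largest index `i` with
`x_i ≠ 0`, i.e. the number of positive terms of the Euclidean chain. -/
noncomputable def euclidF (x₁ x₂ : ℕ) : ℕ := sSup {i | chain x₁ x₂ i ≠ 0}

theorem chainNext_zero_right (a : ℕ) : chainNext a 0 = 0 := by
  simp [chainNext]

theorem chainNext_mul_of_modEq {a m x : ℕ} (h : a ≡ x [MOD m * x]) :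
    chainNext a (m * x) = (m - 1) * x := by
  unfold chainNext
  rw [show a % (m * x) = x % (m * x) from h]
  split_ifs with hb
  · rcases hb with hb | hb
    · rcases Nat.mul_eq_zero.mp hb with rfl | rfl <;> simp
    · obtain ⟨rfl, rfl⟩ := mul_eq_one.mp hb
      rfl
  · obtain _ | _ | m := m
    · simp at hb
    · simp
    · have hx : 0 < x := Nat.pos_of_ne_zero (by rintro rfl; simp at hb)
      have hlt : x < (m + 2) * x := by nlinarith
      rw [Nat.mod_eq_of_lt hlt, Nat.mod_eq_of_lt (by omega)]
      simp only [add_tsub_cancel_right, add_mul, one_mul]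

theorem chainNext_succ_mul (m x : ℕ) : chainNext ((m + 1) * x) (m * x) = (m - 1) * x :=
  chainNext_mul_of_modEq (by simp [Nat.ModEq, add_mul, Nat.add_mod_left])

theorem chain_mul_add_two (x k : ℕ) : ∀ j, chain x (k * x) (j + 2) = (k - j) * x
  | 0 => by simp [chain]
  | 1 => chainNext_mul_of_modEq rfl
  | j + 2 => by
    show chainNext (chain x (k * x) (j + 2)) (chain x (k * x) (j + 1 + 2)) = _
    rw [chain_mul_add_two x k j, chain_mul_add_two x k (j + 1)]
    rcases lt_or_ge j k with hj | hj
    · rw [show k - j = k - (j + 1) + 1 by omega, chainNext_succ_mul, Nat.sub_sub]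
    · rw [Nat.sub_eq_zero_of_le (by omega : k ≤ j + 1),
        Nat.sub_eq_zero_of_le (by omega : k ≤ j + 2), zero_mul, chainNext_zero_right]

theorem chain_eq_zero_of_le {x₁ x₂ m n : ℕ} (hm : 2 ≤ m) (hmn : m ≤ n)
    (h : chain x₁ x₂ m = 0) : chain x₁ x₂ n = 0 := by
  induction n, hmn using Nat.le_induction with
  | base => exact h
  | succ n hmn ih =>
    obtain ⟨n, rfl⟩ : ∃ i, n = i + 2 := ⟨n - 2, by omega⟩
    show chainNext _ (chain x₁ x₂ (n + 2)) = 0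
    rw [ih, chainNext_zero_right]

theorem euclidF_eq_of_chain_succ_eq_zero {x₁ x₂ n : ℕ} (hn : 1 ≤ n)
    (hpos : chain x₁ x₂ n ≠ 0) (hzero : chain x₁ x₂ (n + 1) = 0) :
    euclidF x₁ x₂ = n := by
  refine IsGreatest.csSup_eq ⟨hpos, fun i hi => ?_⟩
  by_contra! hni
  exact hi (chain_eq_zero_of_le (by omega) hni hzero)

/-- If `x` and `y` are positive integers with `x ∣ y`, then the
Euclidean chain function satisfies `F(x, y) = 1 + y / x`. -/
theorem euclidF_of_dvd (x y : ℕ) (hx : 0 < x) (hy : 0 < y) (hxy : x ∣ y) :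
    euclidF x y = 1 + y / x := by
  obtain ⟨k, rfl⟩ := hxy
  have hk : 0 < k := Nat.pos_of_mul_pos_left hy
  rw [Nat.mul_div_cancel_left k hx, mul_comm]
  apply euclidF_eq_of_chain_succ_eq_zero (by omega)
  · rw [show 1 + k = k - 1 + 2 by omega, chain_mul_add_two, show k - (k - 1) = 1 by omega]
    omega
  · rw [show 1 + k + 1 = k + 2 by omega, chain_mul_add_two, Nat.sub_self, zero_mul]
end

section
/- Let s ≥ 1 and let (c, a_1, …, a_s) be a tuple of positive integers such that gcd(c, a_1, …, a_s) = 1, a_i divides c, and a_i < c for all i ∈ {1, …, s}. Then there is a unique p ≥ 1 such that there exists a smooth arithmetical structure (d,r) on CT(p,s) with r_p = c and r_{ℓ_i} = a_i for all i ∈ {1, …, s}; moreover, this smooth arithmetical structure is unique. -/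
namespace CTAux

lemma ctstruct_ext {p s : ℕ} {A B : CTStruct p s} (h1 : A.d = B.d) (h2 : A.r = B.r)
    (h3 : A.dl = B.dl) (h4 : A.rl = B.rl) : A = B := by
  cases A
  cases B
  dsimp only at h1 h2 h3 h4
  subst h1; subst h2; subst h3; subst h4
  rfl

def ctNext (x y : ℕ) : ℕ := (y - x % y) % y

def ctSeq (A c : ℕ) : ℕ → ℕ × ℕ
  | 0 => (A, c)
  | k + 1 => ((ctSeq A c k).2, ctNext (ctSeq A c k).1 (ctSeq A c k).2)

lemma ctSeq_zero (A c : ℕ) : ctSeq A c 0 = (A, c) := rfl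

lemma ctSeq_fst (A c k : ℕ) : (ctSeq A c (k+1)).1 = (ctSeq A c k).2 := rfl
lemma ctSeq_snd (A c k : ℕ) :
    (ctSeq A c (k+1)).2 = ctNext (ctSeq A c k).1 (ctSeq A c k).2 := rfl

lemma ctNext_lt {x y : ℕ} (hy : 0 < y) : ctNext x y < y := Nat.mod_lt _ hy

lemma ctNext_zero (x : ℕ) : ctNext x 0 = 0 := by simp [ctNext]

lemma dvd_ctNext_add {x y : ℕ} (hy : 0 < y) : y ∣ ctNext x y + x := by
  have h1 : x % y ≤ x := Nat.mod_le x y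
  have h2 : x % y < y := Nat.mod_lt x hy
  have h3 : x - x % y = y * (x / y) := by
    have := Nat.mod_add_div x y; omega
  have h5 : y ∣ (y - x % y) + x := by
    refine ⟨1 + x / y, ?_⟩
    rw [Nat.mul_add, ← h3]; omega
  have h6 : ctNext x y + x ≡ (y - x % y) + x [MOD y] :=
    (Nat.mod_modEq _ y).add_right x
  have h7 : (y - x % y) + x ≡ 0 [MOD y] := Nat.modEq_zero_iff_dvd.mpr h5
  exact Nat.modEq_zero_iff_dvd.mp (h6.trans h7)

lemma eq_ctNext {x y z : ℕ} (hy : 0 < y) (hz : z < y) (hd : y ∣ z + x) :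
    z = ctNext x y := by
  have h1 : y ∣ ctNext x y + x := dvd_ctNext_add hy
  have h2 : z + x ≡ ctNext x y + x [MOD y] :=
    (Nat.modEq_zero_iff_dvd.mpr hd).trans (Nat.modEq_zero_iff_dvd.mpr h1).symm
  have h3 : z ≡ ctNext x y [MOD y] := h2.add_right_cancel' x
  have h4 := ctNext_lt (x := x) hy
  calc z = z % y := (Nat.mod_eq_of_lt hz).symm
    _ = ctNext x y % y := h3
    _ = ctNext x y := Nat.mod_eq_of_lt h4

lemma ctSeq_reaches_zero (A c : ℕ) : ∃ k, (ctSeq A c k).2 = 0 := by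
  have h : ∀ k, (ctSeq A c k).2 = 0 ∨ (ctSeq A c k).2 + k ≤ c := by
    intro k; induction k with
    | zero => right; simp [ctSeq]
    | succ k ih =>
      rcases Nat.eq_zero_or_pos (ctSeq A c k).2 with h0 | h0
      · left; rw [ctSeq_snd, h0, ctNext_zero]
      · have hlt := ctNext_lt (x := (ctSeq A c k).1) h0
        rcases ih with h | h
        · exact absurd h (by omega)
        · right; rw [ctSeq_snd]; omega
  rcases h c with h | h
  · exact ⟨c, h⟩
  · exact ⟨c, by omega⟩

end CTAux

open CTAux in
/-- Let `s ≥ 1` and let `(c, a_1, …, a_s)` be positive integers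
with `gcd(c, a_1, …, a_s) = 1`, `a_i ∣ c` and `a_i < c` for all `i`.  Then there is
a unique `p ≥ 1` carrying a smooth arithmetical structure on `CT(p,s)` with
`r_p = c` and `r_{ℓ_i} = a_i` for all `i`, and this structure is itself unique. -/
theorem ct_unique_smooth_from_leaf_data (s : ℕ) (hs : 1 ≤ s) (c : ℕ) (hc : 0 < c)
    (a : ℕ → ℕ) (ha : ∀ i, 1 ≤ i → i ≤ s → 0 < a i ∧ a i ∣ c ∧ a i < c)
    (hgcd : Nat.gcd c ((Finset.Icc 1 s).gcd a) = 1) :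
    ∃! X : Σ p : ℕ, CTStruct p s, 1 ≤ X.1 ∧ X.2.IsArith ∧ X.2.IsSmooth ∧
      X.2.r X.1 = c ∧ ∀ i, 1 ≤ i → i ≤ s → X.2.rl i = a i := by
  classical
  set A := ∑ j ∈ Finset.Icc 1 s, a j with hAdef
  have hA : 0 < A := by
    have h1 : a 1 ≤ A := Finset.single_le_sum (fun i _ => Nat.zero_le (a i))
      (Finset.mem_Icc.mpr ⟨le_rfl, hs⟩)
    have := (ha 1 le_rfl hs).1; omega
  have hex := ctSeq_reaches_zero A c
  set p := Nat.find hex with hpdef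
  have hp0 : (ctSeq A c p).2 = 0 := by rw [hpdef]; exact Nat.find_spec hex
  have hpos : ∀ k, k < p → 0 < (ctSeq A c k).2 := by
    intro k hk
    rw [hpdef] at hk
    exact Nat.pos_of_ne_zero (Nat.find_min hex hk)
  have hp1 : 1 ≤ p := by
    rcases Nat.eq_zero_or_pos p with h | h
    · rw [h] at hp0; simp [ctSeq] at hp0; omega
    · exact h
  have hdec : ∀ k, k < p → (ctSeq A c (k+1)).2 < (ctSeq A c k).2 := by
    intro k hk
    rw [ctSeq_snd]
    exact ctNext_lt (hpos k hk)
  have hfpos : ∀ k, k ≤ p → 0 < (ctSeq A c k).1 := by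
    intro k hk
    cases k with
    | zero => simpa [ctSeq] using hA
    | succ k => rw [ctSeq_fst]; exact hpos k (by omega)
  -- witness labels
  set dW : ℕ → ℕ := fun i => if 1 ≤ i ∧ i ≤ p then
      (ctNext (ctSeq A c (p-i)).1 (ctSeq A c (p-i)).2 + (ctSeq A c (p-i)).1)
        / (ctSeq A c (p-i)).2 else 0 with hdWdef
  set rW : ℕ → ℕ := fun i => if 1 ≤ i ∧ i ≤ p then (ctSeq A c (p-i)).2 else 0 with hrWdef
  set dlW : ℕ → ℕ := fun j => if 1 ≤ j ∧ j ≤ s then c / a j else 0 with hdlWdef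
  set rlW : ℕ → ℕ := fun j => if 1 ≤ j ∧ j ≤ s then a j else 0 with hrlWdef
  have hdW : ∀ i, 1 ≤ i → i ≤ p → dW i =
      (ctNext (ctSeq A c (p-i)).1 (ctSeq A c (p-i)).2 + (ctSeq A c (p-i)).1)
        / (ctSeq A c (p-i)).2 := by
    intro i h1 h2; simp only [hdWdef]; rw [if_pos ⟨h1, h2⟩]
  have hdW0 : ∀ i, ¬(1 ≤ i ∧ i ≤ p) → dW i = 0 := by
    intro i hi; simp only [hdWdef]; rw [if_neg hi]
  have hrW : ∀ i, 1 ≤ i → i ≤ p → rW i = (ctSeq A c (p-i)).2 := by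
    intro i h1 h2; simp only [hrWdef]; rw [if_pos ⟨h1, h2⟩]
  have hrW0 : ∀ i, ¬(1 ≤ i ∧ i ≤ p) → rW i = 0 := by
    intro i hi; simp only [hrWdef]; rw [if_neg hi]
  have hdlW : ∀ j, 1 ≤ j → j ≤ s → dlW j = c / a j := by
    intro j h1 h2; simp only [hdlWdef]; rw [if_pos ⟨h1, h2⟩]
  have hdlW0 : ∀ j, ¬(1 ≤ j ∧ j ≤ s) → dlW j = 0 := by
    intro j hj; simp only [hdlWdef]; rw [if_neg hj]
  have hrlW : ∀ j, 1 ≤ j → j ≤ s → rlW j = a j := by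
    intro j h1 h2; simp only [hrlWdef]; rw [if_pos ⟨h1, h2⟩]
  have hrlW0 : ∀ j, ¬(1 ≤ j ∧ j ≤ s) → rlW j = 0 := by
    intro j hj; simp only [hrlWdef]; rw [if_neg hj]
  have hrWp : rW p = c := by
    rw [hrW p hp1 le_rfl, Nat.sub_self, ctSeq_zero]
  have hsumW : ∑ j ∈ Finset.Icc 1 s, rlW j = A := by
    rw [hAdef]
    refine Finset.sum_congr rfl (fun j hj => ?_)
    obtain ⟨h1, h2⟩ := Finset.mem_Icc.mp hj
    exact hrlW j h1 h2
  -- the fst value at step p - i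
  have hx_lt : ∀ i, 1 ≤ i → i < p → (ctSeq A c (p-i)).1 = (ctSeq A c (p-(i+1))).2 := by
    intro i h1 h2
    rw [show p - i = (p-(i+1)) + 1 by omega]
    exact ctSeq_fst _ _ _
  have hx_p : (ctSeq A c (p-p)).1 = A := by
    rw [Nat.sub_self, ctSeq_zero]
  -- predecessor identification
  have hr_pred : ∀ i, 1 ≤ i → i ≤ p →
      (if 2 ≤ i then rW (i-1) else 0)
        = ctNext (ctSeq A c (p-i)).1 (ctSeq A c (p-i)).2 := by
    intro i h1 h2
    have hrec := ctSeq_snd A c (p-i)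
    by_cases h : 2 ≤ i
    · rw [if_pos h, hrW (i-1) (by omega) (by omega),
        show p - (i-1) = p - i + 1 by omega]
      exact hrec
    · rw [if_neg h]
      have hi1 : i = 1 := by omega
      subst hi1
      rw [show p - 1 + 1 = p by omega] at hrec
      rw [← hrec]
      exact hp0.symm
  -- successor identification
  have hr_succ : ∀ i, 1 ≤ i → i ≤ p →
      (if i < p then rW (i+1) else 0) +
      (if i = p then ∑ j ∈ Finset.Icc 1 s, rlW j else 0)
        = (ctSeq A c (p-i)).1 := by
    intro i h1 h2
    by_cases h : i = p
    · subst h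
      rw [if_neg (lt_irrefl _), if_pos rfl, hsumW, hx_p, Nat.zero_add]
    · have hlt : i < p := by omega
      rw [if_pos hlt, if_neg h, Nat.add_zero, hrW (i+1) (by omega) (by omega),
        hx_lt i h1 hlt]
  have hWeq : ∀ i, 1 ≤ i → i ≤ p → dW i * rW i =
      (if 2 ≤ i then rW (i-1) else 0) +
      (if i < p then rW (i+1) else 0) +
      (if i = p then ∑ j ∈ Finset.Icc 1 s, rlW j else 0) := by
    intro i h1 h2
    have hy := hpos (p-i) (by omega)
    have hdvd := dvd_ctNext_add (x := (ctSeq A c (p-i)).1) hy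
    rw [hdW i h1 h2, hrW i h1 h2, Nat.div_mul_cancel hdvd,
      hr_pred i h1 h2, Nat.add_assoc, hr_succ i h1 h2]
  have hWarith : IsCTArith p s dW rW dlW rlW := by
    refine ⟨?_, ?_, ?_, ?_, hWeq, ?_, ?_⟩
    · intro i h1 h2
      rw [hdW i h1 h2]
      have hy := hpos (p-i) (by omega)
      have hx := hfpos (p-i) (by omega)
      obtain ⟨q, hq⟩ := dvd_ctNext_add (x := (ctSeq A c (p-i)).1) hy
      rw [hq, Nat.mul_div_cancel_left _ hy]
      rcases Nat.eq_zero_or_pos q with rfl | h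
      · simp only [Nat.mul_zero] at hq; omega
      · exact h
    · intro i h1 h2
      rw [hrW i h1 h2]
      exact hpos _ (by omega)
    · intro j h1 h2
      rw [hdlW j h1 h2]
      obtain ⟨ha1, ha2, _⟩ := ha j h1 h2
      exact Nat.div_pos (Nat.le_of_dvd hc ha2) ha1
    · intro j h1 h2
      rw [hrlW j h1 h2]
      exact (ha j h1 h2).1
    · intro j h1 h2
      rw [hdlW j h1 h2, hrlW j h1 h2, hrWp,
        Nat.div_mul_cancel (ha j h1 h2).2.1]
    · have h1 : (Finset.Icc 1 p).gcd rW ∣ c := by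
        have hm : p ∈ Finset.Icc 1 p := Finset.mem_Icc.mpr ⟨hp1, le_rfl⟩
        have := Finset.gcd_dvd (f := rW) hm
        rwa [hrWp] at this
      have h2 : (Finset.Icc 1 s).gcd rlW = (Finset.Icc 1 s).gcd a := by
        refine Finset.gcd_congr rfl (fun j hj => ?_)
        obtain ⟨hj1, hj2⟩ := Finset.mem_Icc.mp hj
        exact hrlW j hj1 hj2
      have h3 : Nat.gcd ((Finset.Icc 1 p).gcd rW) ((Finset.Icc 1 s).gcd rlW) ∣
          Nat.gcd c ((Finset.Icc 1 s).gcd a) := by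
        refine Nat.dvd_gcd ((Nat.gcd_dvd_left _ _).trans h1) ?_
        rw [h2]
        exact Nat.gcd_dvd_right _ _
      rw [hgcd] at h3
      exact Nat.dvd_one.mp h3
  have hWsmooth : IsCTSmooth p s dW dlW := by
    constructor
    · intro i h1 h2
      have hip : i < p := by omega
      rw [hdW i h1 (by omega)]
      have hy := hpos (p-i) (by omega)
      have hxy : (ctSeq A c (p-i)).2 < (ctSeq A c (p-i)).1 := by
        rw [hx_lt i h1 hip]
        have := hdec (p-(i+1)) (by omega)
        rwa [show p - (i+1) + 1 = p - i by omega] at this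
      obtain ⟨q, hq⟩ := dvd_ctNext_add (x := (ctSeq A c (p-i)).1) hy
      rw [hq, Nat.mul_div_cancel_left _ hy]
      by_contra hq2
      have : (ctSeq A c (p-i)).2 * q ≤ (ctSeq A c (p-i)).2 * 1 :=
        Nat.mul_le_mul (le_refl _) (by omega)
      omega
    · intro j h1 h2
      rw [hdlW j h1 h2]
      obtain ⟨ha1, ha2, ha3⟩ := ha j h1 h2
      obtain ⟨k, hk⟩ := ha2
      rw [hk, Nat.mul_div_cancel_left _ ha1]
      by_contra h
      have : a j * k ≤ a j * 1 := Nat.mul_le_mul (le_refl _) (by omega)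
      omega
  refine ⟨⟨p, ⟨dW, rW, dlW, rlW, hdW0, hrW0, hdlW0, hrlW0⟩⟩,
    ⟨hp1, hWarith, hWsmooth, hrWp, fun j h1 h2 => hrlW j h1 h2⟩, ?_⟩
  rintro ⟨q, B⟩ ⟨hq1, hBa, hBs, hBrp, hBrl⟩
  have hBa' : IsCTArith q s B.d B.r B.dl B.rl := hBa
  have hBs' : IsCTSmooth q s B.d B.dl := hBs
  unfold IsCTArith at hBa'
  unfold IsCTSmooth at hBs'
  obtain ⟨hBd, hBr, hBdl, hBrlpos, hBeq, hBleaf, hBg⟩ := hBa'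
  obtain ⟨hBsm, hBsml⟩ := hBs'
  have hr0 : B.r 0 = 0 := B.r_norm 0 (by omega)
  have hsum : ∑ j ∈ Finset.Icc 1 s, B.rl j = A := by
    rw [hAdef]
    refine Finset.sum_congr rfl (fun j hj => ?_)
    obtain ⟨h1, h2⟩ := Finset.mem_Icc.mp hj
    exact hBrl j h1 h2
  -- monotonicity of B.r
  have hmono : ∀ i, 1 ≤ i → i + 1 ≤ q → B.r i < B.r (i+1) := by
    intro i
    induction i with
    | zero => intro h _; exact absurd h (by omega)
    | succ n ih =>
      intro _ h2
      have hd1 : 2 ≤ B.d (n+1) := hBsm (n+1) (by omega) (by omega)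
      have hr1 : 0 < B.r (n+1) := hBr (n+1) (by omega) (by omega)
      have hmul : 2 * B.r (n+1) ≤ B.d (n+1) * B.r (n+1) :=
        Nat.mul_le_mul hd1 (le_refl _)
      have e := hBeq (n+1) (by omega) (by omega)
      rcases Nat.eq_zero_or_pos n with rfl | hn
      · rw [if_neg (by omega), if_pos (by omega), if_neg (by omega)] at e
        omega
      · have ihh := ih (by omega) (by omega)
        rw [if_pos (by omega), if_pos (by omega), if_neg (by omega)] at e
        simp only [Nat.add_sub_cancel] at e
        omega
  -- the sequence matches
  have hmatch : ∀ k, k ≤ q → (ctSeq A c k).2 = B.r (q - k) ∧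
      (1 ≤ k → (ctSeq A c k).1 = B.r (q - k + 1)) := by
    intro k
    induction k with
    | zero =>
      intro _
      refine ⟨?_, fun h => absurd h (by omega)⟩
      simp only [Nat.sub_zero]
      exact hBrp.symm
    | succ k ih =>
      intro hk
      obtain ⟨ih2, ih1⟩ := ih (by omega)
      have hm1 : 1 ≤ q - k := by omega
      have hy : 0 < (ctSeq A c k).2 := by
        rw [ih2]; exact hBr (q-k) hm1 (by omega)
      have e := hBeq (q-k) hm1 (by omega)
      have hx : (if q - k < q then B.r (q-k+1) else 0) +
          (if q - k = q then ∑ j ∈ Finset.Icc 1 s, B.rl j else 0)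
            = (ctSeq A c k).1 := by
        rcases Nat.eq_zero_or_pos k with rfl | hk0
        · rw [if_neg (by omega), if_pos (by omega), hsum]
          simp [ctSeq]
        · rw [if_pos (by omega), if_neg (by omega), Nat.add_zero]
          exact (ih1 hk0).symm
      have hfirst : (if 2 ≤ q - k then B.r (q - k - 1) else 0) = B.r (q - k - 1) := by
        by_cases h : 2 ≤ q - k
        · rw [if_pos h]
        · rw [if_neg h, show q - k - 1 = 0 by omega, hr0]
      rw [Nat.add_assoc, hx, hfirst] at e
      have hdvd : (ctSeq A c k).2 ∣ B.r (q-k-1) + (ctSeq A c k).1 := by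
        refine ⟨B.d (q-k), ?_⟩
        rw [← e, ih2, Nat.mul_comm]
      have hlt : B.r (q-k-1) < (ctSeq A c k).2 := by
        rw [ih2]
        rcases Nat.eq_zero_or_pos (q - k - 1) with h0 | h0
        · rw [h0, hr0]; exact hBr (q-k) hm1 (by omega)
        · have := hmono (q-k-1) h0 (by omega)
          rwa [show q - k - 1 + 1 = q - k by omega] at this
      have key := eq_ctNext hy hlt hdvd
      constructor
      · rw [ctSeq_snd, ← key, Nat.sub_sub]
      · intro _
        rw [ctSeq_fst, ih2]
        congr 1
        omega
  have hq0 : (ctSeq A c q).2 = 0 := by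
    rw [(hmatch q le_rfl).1, Nat.sub_self, hr0]
  have hpq : p ≤ q := by
    rw [hpdef]
    exact Nat.find_min' hex hq0
  have hqp : q = p := by
    by_contra h
    have hlt : p < q := by omega
    have h1 := (hmatch p (by omega)).1
    rw [hp0] at h1
    have h2 := hBr (q - p) (by omega) (by omega)
    omega
  subst hqp
  have hrB : ∀ i, B.r i = rW i := by
    intro i
    by_cases hi : 1 ≤ i ∧ i ≤ p
    · rw [hrW i hi.1 hi.2]
      have h1 := (hmatch (p - i) (by omega)).1
      rw [show p - (p - i) = i by omega] at h1
      exact h1.symm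
    · rw [B.r_norm i hi, hrW0 i hi]
  have hrlB : ∀ j, B.rl j = rlW j := by
    intro j
    by_cases hj : 1 ≤ j ∧ j ≤ s
    · rw [hrlW j hj.1 hj.2, hBrl j hj.1 hj.2]
    · rw [B.rl_norm j hj, hrlW0 j hj]
  have hdlB : ∀ j, B.dl j = dlW j := by
    intro j
    by_cases hj : 1 ≤ j ∧ j ≤ s
    · obtain ⟨h1, h2⟩ := hj
      have e := hBleaf j h1 h2
      rw [hBrl j h1 h2, hBrp] at e
      rw [hdlW j h1 h2, ← e, Nat.mul_div_cancel _ (ha j h1 h2).1]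
    · rw [B.dl_norm j hj, hdlW0 j hj]
  have hdB : ∀ i, B.d i = dW i := by
    intro i
    by_cases hi : 1 ≤ i ∧ i ≤ p
    · obtain ⟨h1, h2⟩ := hi
      have e1 := hBeq i h1 h2
      simp only [hrB, hrlB] at e1
      have e2 := hWeq i h1 h2
      have hrpos : 0 < rW i := by
        rw [hrW i h1 h2]; exact hpos _ (by omega)
      exact Nat.eq_of_mul_eq_mul_right hrpos (e1.trans e2.symm)
    · rw [B.d_norm i hi, hdW0 i hi]
  have hBW : B = ⟨dW, rW, dlW, rlW, hdW0, hrW0, hdlW0, hrlW0⟩ :=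
    ctstruct_ext (funext hdB) (funext hrB) (funext hdlB) (funext hrlB)
  exact congrArg (fun t => (⟨p, t⟩ : Σ p : ℕ, CTStruct p s)) hBW
end

section
/- Let s ≥ 1 and let (c, a_1, …, a_s) be a tuple of positive integers such that gcd(c, a_1, …, a_s) = 1, a_i divides c, and a_i < c for all i ∈ {1, …, s}. Then the unique p ≥ 1 for which there is a smooth arithmetical structure on CT(p,s) with r_p = c and r_{ℓ_i} = a_i for all i satisfies p = F(Σ_{j=1}^{s} a_j, c) − 1, where F is the Euclidean chain function. -/
lemma chain_one (x₁ x₂ : ℕ) : chain x₁ x₂ 1 = x₁ := rfl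
lemma chain_two (x₁ x₂ : ℕ) : chain x₁ x₂ 2 = x₂ := rfl
lemma chain_three (x₁ x₂ : ℕ) : chain x₁ x₂ 3 = chainNext x₁ x₂ := rfl
lemma chain_succ3 (x₁ x₂ n : ℕ) :
    chain x₁ x₂ (n + 3) = chainNext (chain x₁ x₂ (n + 1)) (chain x₁ x₂ (n + 2)) := rfl

lemma chain_eventually_zero (x₁ x₂ n : ℕ) (h : chain x₁ x₂ (n + 2) = 0) :
    ∀ k, chain x₁ x₂ (n + 2 + k) = 0 := by
  intro k
  induction k with
  | zero => exact h
  | succ k ih =>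
    rw [show n + 2 + (k + 1) = (n + k) + 3 from by omega, chain_succ3,
      show n + k + 2 = n + 2 + k from by omega, ih]
    simp [chainNext]

lemma resid (c x A m : ℕ) (hx1 : 1 ≤ x) (hx2 : x < c) (h : m * c = x + A) :
    (c - A % c) % c = x := by
  obtain ⟨m', rfl⟩ : ∃ m', m = m' + 1 := by
    rcases m with _ | m
    · simp at h; omega
    · exact ⟨m, rfl⟩
  have hmul : (m' + 1) * c = m' * c + c := by ring
  have hA : A = (c - x) + m' * c := by omega
  have h1 : A % c = c - x := by
    rw [hA, Nat.add_mul_mod_self_right, Nat.mod_eq_of_lt (by omega)]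
  rw [h1, show c - (c - x) = x from by omega, Nat.mod_eq_of_lt hx2]

/-- Let `s ≥ 1` and let `(c, a_1, …, a_s)` be positive integers
with `gcd(c, a_1, …, a_s) = 1`, `a_i ∣ c` and `a_i < c` for all `i`.  Then any `p ≥ 1`
carrying a smooth arithmetical structure on `CT(p,s)` with `r_p = c` and
`r_{ℓ_i} = a_i` for all `i` satisfies `p = F(Σ_{j=1}^{s} a_j, c) - 1`, where `F` is
the Euclidean chain function. -/
theorem ct_smooth_path_length (s : ℕ) (hs : 1 ≤ s) (c : ℕ) (hc : 0 < c)
    (a : ℕ → ℕ) (ha : ∀ i, 1 ≤ i → i ≤ s → 0 < a i ∧ a i ∣ c ∧ a i < c)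
    (hgcd : Nat.gcd c ((Finset.Icc 1 s).gcd a) = 1)
    (p : ℕ) (hp : 1 ≤ p) (d r dl rl : ℕ → ℕ)
    (h : IsCTArith p s d r dl rl) (hsm : IsCTSmooth p s d dl)
    (hrp : r p = c) (hrl : ∀ i, 1 ≤ i → i ≤ s → rl i = a i) :
    p = euclidF (∑ j ∈ Finset.Icc 1 s, a j) c - 1 := by
  obtain ⟨hd, hr, hdl, hrlpos, heq, hleaf, hg⟩ := h
  obtain ⟨hsm1, hsm2⟩ := hsm
  have ha1 := ha 1 le_rfl hs
  have hc2 : 2 ≤ c := by omega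
  set A := ∑ j ∈ Finset.Icc 1 s, a j with hAdef
  have hsum : ∑ j ∈ Finset.Icc 1 s, rl j = A := by
    apply Finset.sum_congr rfl
    intro j hj
    simp only [Finset.mem_Icc] at hj
    exact hrl j hj.1 hj.2
  have hA1 : 1 ≤ A :=
    le_trans ha1.1 (Finset.single_le_sum (f := a) (fun i _ => Nat.zero_le _)
      (Finset.mem_Icc.mpr ⟨le_rfl, hs⟩))
  by_cases hp1 : p = 1
  · subst hp1
    have he := heq 1 le_rfl le_rfl
    rw [if_neg (by omega), if_neg (by omega), if_pos rfl, hsum, hrp] at he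
    have hAc : A % c = 0 := by
      have hAe : A = d 1 * c := by omega
      rw [hAe]; exact Nat.mul_mod_left _ _
    have h3 : chain A c 3 = 0 := by
      rw [chain_three]
      simp only [chainNext]
      rw [if_neg (by omega), hAc, Nat.sub_zero, Nat.mod_self]
    have hzero := chain_eventually_zero A c 1 h3
    have hset : {i | chain A c i ≠ 0} = Set.Icc 1 2 := by
      ext i
      simp only [Set.mem_setOf_eq, Set.mem_Icc]
      constructor
      · intro hi
        have h1 : 1 ≤ i := by
          rcases i with _ | i
          · exact absurd rfl hi
          · omega
        have h2 : i ≤ 2 := by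
          by_contra hgt
          have := hzero (i - 3)
          rw [show 1 + 2 + (i - 3) = i from by omega] at this
          exact hi this
        exact ⟨h1, h2⟩
      · rintro ⟨h1, h2⟩
        interval_cases i
        · rw [chain_one]; omega
        · rw [chain_two]; omega
    rw [euclidF, hset, csSup_Icc (by omega : (1:ℕ) ≤ 2)]
  · have hp2 : 2 ≤ p := by omega
    -- r 2 = d 1 * r 1
    have hr21 : d 1 * r 1 = r 2 := by
      have he := heq 1 le_rfl (by omega)
      rw [if_neg (by omega), if_pos (by omega), if_neg (by omega),
        show (1:ℕ) + 1 = 2 from rfl] at he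
      omega
    have hmono : ∀ i, 1 ≤ i → i ≤ p - 1 → r i < r (i + 1) := by
      intro i hi
      induction i, hi using Nat.le_induction with
      | base =>
        intro _
        have hd2 : 2 ≤ d 1 := hsm1 1 le_rfl (by omega)
        have hr1 : 1 ≤ r 1 := hr 1 le_rfl (by omega)
        have h2 : 2 * r 1 ≤ d 1 * r 1 := Nat.mul_le_mul_right _ hd2
        rw [show (1:ℕ) + 1 = 2 from rfl]
        omega
      | succ i hi ih =>
        intro hip
        have ihlt := ih (by omega)
        have he := heq (i + 1) (by omega) (by omega)
        rw [if_pos (by omega), if_pos (by omega), if_neg (by omega)] at he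
        simp only [Nat.add_sub_cancel, add_zero] at he
        have hd2 : 2 ≤ d (i + 1) := hsm1 (i + 1) (by omega) hip
        have h2 : 2 * r (i + 1) ≤ d (i + 1) * r (i + 1) := Nat.mul_le_mul_right _ hd2
        omega
    have hr2 : ∀ j, 2 ≤ j → j ≤ p → 2 ≤ r j := by
      intro j h2 hjp
      have h1 := hmono (j - 1) (by omega) (by omega)
      have h0 := hr (j - 1) (by omega) (by omega)
      rw [show j - 1 + 1 = j from by omega] at h1
      omega
    have key : ∀ k, 1 ≤ k → k ≤ p - 1 →
        chain A c (k + 1) = r (p - k + 1) ∧ chain A c (k + 2) = r (p - k) := by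
      intro k hk
      induction k, hk using Nat.le_induction with
      | base =>
        intro _
        refine ⟨?_, ?_⟩
        · rw [show p - 1 + 1 = p from by omega, show (1:ℕ) + 1 = 2 from rfl, chain_two]
          exact hrp.symm
        · rw [show (1:ℕ) + 2 = 3 from rfl, chain_three]
          have he := heq p (by omega) le_rfl
          rw [if_pos (by omega), if_neg (by omega), if_pos rfl, hsum, hrp] at he
          have hlt : r (p - 1) < c := by
            have h1 := hmono (p - 1) (by omega) le_rfl
            rw [show p - 1 + 1 = p from by omega, hrp] at h1
            exact h1
          simp only [chainNext]
          rw [if_neg (by omega)]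
          exact resid c (r (p - 1)) A (d p) (hr (p - 1) (by omega) (by omega)) hlt (by omega)
      | succ k hk ih =>
        intro hk1
        obtain ⟨ih1, ih2⟩ := ih (by omega)
        refine ⟨?_, ?_⟩
        · rw [show p - (k + 1) + 1 = p - k from by omega]
          exact ih2
        · rw [show k + 1 + 2 = k + 3 from by omega, chain_succ3, ih1, ih2]
          have hj2 : 2 ≤ p - k := by omega
          have hjp : p - k ≤ p - 1 := by omega
          have hrj : 2 ≤ r (p - k) := hr2 (p - k) hj2 (by omega)
          simp only [chainNext]
          rw [if_neg (by omega)]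
          have he := heq (p - k) (by omega) (by omega)
          rw [if_pos (by omega), if_pos (by omega), if_neg (by omega)] at he
          have hx2 : r (p - k - 1) < r (p - k) := by
            have h1 := hmono (p - k - 1) (by omega) (by omega)
            rwa [show p - k - 1 + 1 = p - k from by omega] at h1
          have hres := resid (r (p - k)) (r (p - k - 1)) (r (p - k + 1)) (d (p - k))
            (hr (p - k - 1) (by omega) (by omega)) hx2 (by omega)
          rw [show p - (k + 1) = p - k - 1 from by omega]
          exact hres
    have hch_p1 : chain A c (p + 1) = r 1 := by
      have h2 := (key (p - 1) (by omega) le_rfl).2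
      rwa [show p - 1 + 2 = p + 1 from by omega, show p - (p - 1) = 1 from by omega] at h2
    have hch_p : chain A c p = r 2 := by
      have h1 := (key (p - 1) (by omega) le_rfl).1
      rwa [show p - 1 + 1 = p from by omega, show p - (p - 1) + 1 = 2 from by omega] at h1
    have hch_p2 : chain A c (p + 2) = 0 := by
      rw [show p + 2 = (p - 1) + 3 from by omega, chain_succ3,
        show p - 1 + 1 = p from by omega, show p - 1 + 2 = p + 1 from by omega,
        hch_p, hch_p1]
      simp only [chainNext]
      by_cases h01 : r 1 = 0 ∨ r 1 = 1
      · rw [if_pos h01]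
      · rw [if_neg h01]
        have : r 2 % r 1 = 0 := by rw [← hr21]; exact Nat.mul_mod_left _ _
        rw [this, Nat.sub_zero, Nat.mod_self]
    have hzero := chain_eventually_zero A c p hch_p2
    have hset : {i | chain A c i ≠ 0} = Set.Icc 1 (p + 1) := by
      ext i
      simp only [Set.mem_setOf_eq, Set.mem_Icc]
      constructor
      · intro hi
        have h1 : 1 ≤ i := by
          rcases i with _ | i
          · exact absurd rfl hi
          · omega
        have h2 : i ≤ p + 1 := by
          by_contra hgt
          have := hzero (i - (p + 2))
          rw [show p + 2 + (i - (p + 2)) = i from by omega] at this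
          exact hi this
        exact ⟨h1, h2⟩
      · rintro ⟨h1, h2⟩
        rcases eq_or_lt_of_le h1 with heq1 | hgt1
        · rw [← heq1, chain_one]; omega
        · rcases eq_or_lt_of_le h2 with heqp | hltp
          · rw [heqp, hch_p1]
            exact (hr 1 le_rfl (by omega)).ne'
          · have hk := (key (i - 1) (by omega) (by omega)).1
            rw [show i - 1 + 1 = i from by omega] at hk
            rw [hk]
            exact (hr (p - (i - 1) + 1) (by omega) (by omega)).ne'
    have hF : euclidF A c = p + 1 := by
      rw [euclidF, hset, csSup_Icc (by omega : (1:ℕ) ≤ p + 1)]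
    omega
end

section
/- Let p ≥ 1 and s ≥ 1 be integers and let (d,r) be a smooth arithmetical structure on CT(p,s). Then d_p > 1 if and only if r_p < Σ_{j=1}^{s} r_{ℓ_j}. -/
/-- A smooth arithmetical structure `(d, r)` on `CT(p,s)` has
`d_p > 1` if and only if `r_p < Σ_{j=1}^{s} r_{ℓ_j}`. -/
theorem ct_smooth_dp_gt_one_iff (p s : ℕ) (hp : 1 ≤ p) (hs : 1 ≤ s)
    (d r dl rl : ℕ → ℕ) (h : IsCTArith p s d r dl rl)
    (hsm : IsCTSmooth p s d dl) :
    1 < d p ↔ r p < ∑ j ∈ Finset.Icc 1 s, rl j := by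

  obtain ⟨hd, hr, hdl, hrl, heq, hleaf, hgcd⟩ := h
  obtain ⟨hsm1, hsm2⟩ := hsm
  set S := ∑ j ∈ Finset.Icc 1 s, rl j with hS
  -- r is strictly increasing along the path
  have mono : ∀ i, 1 ≤ i → i < p → r i < r (i + 1) := by
    intro i hi
    induction i, hi using Nat.le_induction with
    | base =>
      intro h1p
      have e := heq 1 le_rfl hp
      have hne : ¬ (1 = p) := by omega
      have h2 : ¬ (2 ≤ 1) := by omega
      simp [h2, h1p, hne] at e
      have hd1 : 2 ≤ d 1 := hsm1 1 le_rfl (by omega)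
      have hr1 : 0 < r 1 := hr 1 le_rfl hp
      nlinarith [e]
    | succ i hi ih =>
      intro hip
      have hIH : r i < r (i + 1) := ih (by omega)
      have e := heq (i + 1) (by omega) (by omega)
      have h2 : 2 ≤ i + 1 := by omega
      have hne : ¬ (i + 1 = p) := by omega
      simp only [h2, hip, hne, if_true, if_false, if_pos, if_neg, not_false_iff] at e
      simp only [Nat.add_sub_cancel] at e
      have hdi : 2 ≤ d (i + 1) := hsm1 (i + 1) (by omega) (by omega)
      have hri : 0 < r (i + 1) := hr (i + 1) (by omega) (by omega)
      nlinarith [e]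
  have hrp : 0 < r p := hr p hp le_rfl
  have hdp : 0 < d p := hd p hp le_rfl
  rcases Nat.lt_or_ge 1 p with hp2 | hp1
  · -- p ≥ 2
    have e := heq p hp le_rfl
    have h2 : 2 ≤ p := hp2
    have hnlt : ¬ (p < p) := lt_irrefl p
    simp only [h2, hnlt, if_true, if_false, if_pos, if_neg, not_false_iff, if_pos rfl] at e
    have hm : r (p - 1) < r p := by
      have := mono (p - 1) (by omega) (by omega)
      have hpe : p - 1 + 1 = p := by omega
      rwa [hpe] at this
    constructor
    · intro hd2
      nlinarith [e]
    · intro hlt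
      by_contra hc
      have hd1 : d p = 1 := by omega
      rw [hd1, one_mul] at e
      omega
  · -- p = 1
    have hpe : p = 1 := by omega
    subst hpe
    have e := heq 1 le_rfl le_rfl
    simp only [show ¬ (2 ≤ 1) by omega, show ¬ (1 < 1) by omega, if_false, if_pos rfl,
      not_false_iff, if_true] at e
    simp only [zero_add] at e
    constructor
    · intro hd2
      nlinarith [e]
    · intro hlt
      by_contra hc
      have hd1 : d 1 = 1 := by omega
      rw [hd1, one_mul] at e
      omega
end

section
/- Let p ≥ 1 be an integer. There are no smooth arithmetical structures (d,r) on the bident CT(p,2) with d_p > 1; equivalently, every smooth arithmetical structure on CT(p,2) has d_p = 1. -/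
/-- For `p ≥ 1`, there are no smooth arithmetical structures on
the bident `CT(p,2)` with `d_p > 1`: every smooth arithmetical structure on
`CT(p,2)` has `d_p = 1`. -/
theorem ct_bident_smooth_dp_eq_one (p : ℕ) (hp : 1 ≤ p)
    (d r dl rl : ℕ → ℕ) (h : IsCTArith p 2 d r dl rl)
    (hsm : IsCTSmooth p 2 d dl) :
    ¬ 1 < d p ∧ d p = 1 := by
  obtain ⟨hd, hr, hdl, hrl, heq, hleaf, -⟩ := h
  obtain ⟨hsd, hsdl⟩ := hsm
  -- each leaf r-value is at most half of r p
  have hrl1 : 2 * rl 1 ≤ r p := by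
    have := hleaf 1 le_rfl (by norm_num)
    have h2 := hsdl 1 le_rfl (by norm_num)
    nlinarith [hrl 1 le_rfl (by norm_num : (1:ℕ) ≤ 2)]
  have hrl2 : 2 * rl 2 ≤ r p := by
    have := hleaf 2 (by norm_num) le_rfl
    have h2 := hsdl 2 (by norm_num) le_rfl
    nlinarith [hrl 2 (by norm_num) le_rfl]
  have hsum : ∑ j ∈ Finset.Icc 1 2, rl j = rl 1 + rl 2 := by
    rw [show Finset.Icc 1 2 = {1, 2} from rfl]
    simp [Finset.sum_insert]
  -- strict monotonicity along the path
  have mono : ∀ i, 1 ≤ i → i + 1 ≤ p → r i < r (i + 1) := by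
    intro i hi
    induction i, hi using Nat.le_induction with
    | base =>
      intro h1p
      have e := heq 1 le_rfl (by omega)
      have hd1 := hsd 1 le_rfl (by omega)
      have h1lt : 1 < p := by omega
      have h1ne : 1 ≠ p := by omega
      rw [if_neg (by omega), if_pos h1lt, if_neg h1ne] at e
      have := hr 1 le_rfl (by omega)
      nlinarith
    | succ i hi ih =>
      intro hip
      have hlt : r i < r (i + 1) := ih (by omega)
      have e := heq (i + 1) (by omega) (by omega)
      have hdi := hsd (i + 1) (by omega) (by omega)
      rw [if_pos (by omega : 2 ≤ i + 1), if_pos (by omega : i + 1 < p),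
        if_neg (by omega : ¬ i + 1 = p)] at e
      simp only [Nat.add_sub_cancel] at e
      have := hr (i + 1) (by omega) (by omega)
      nlinarith
  have hdp1 : d p = 1 := by
    by_contra hne
    have hdp2 : 2 ≤ d p := by
      have := hd p hp le_rfl
      omega
    have e := heq p hp le_rfl
    rw [if_pos (rfl : p = p), hsum] at e
    have hrp := hr p hp le_rfl
    rcases Nat.lt_or_ge p 2 with h1 | h2
    · -- p = 1
      have hp1 : p = 1 := by omega
      rw [if_neg (by omega : ¬ 2 ≤ p), if_neg (by omega : ¬ p < p)] at e
      nlinarith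
    · rw [if_pos h2, if_neg (lt_irrefl p)] at e
      have hm := mono (p - 1) (by omega) (by omega)
      rw [show p - 1 + 1 = p by omega] at hm
      nlinarith
  exact ⟨by omega, hdp1⟩
end
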